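/- arXiv:2605.14176 — 2 statements merged into one kernel-verified Lean document; each statement's English description precedes it below -/
import Mathlib

section
/- For every integer t ≥ 4, letting n = 8t+6 (the order of C_t = T(t,t,t+1,t)), one has π(C_t) − ((4n^2+8n+40)/(n+2)^2)·(3/2)^{(n−6)/2} = (3/2)^{4t} · (160t^4 − 200t^3 − 1239t^2 − 891t − 162) / (216(t+1)^2(t+2)(t+3)) > 0. In particular π(C_t) strictly exceeds the conjectured bound for n ≡ 2 (mod 4). -/
open Finset SimpleGraph Matrix

/-- The tree `T(a₀,…,a_{m-1})`: a core path on `Fin m`, with `a i` pendant paths of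
length two attached to core vertex `i`.  A pendant path at `i` consists of a middle
vertex `⟨i, p, false⟩` and a leaf `⟨i, p, true⟩`. -/
def Tfam (m : ℕ) (a : ℕ → ℕ) :
    SimpleGraph (Fin m ⊕ (Σ i : Fin m, Fin (a i) × Bool)) :=
  SimpleGraph.fromRel (fun u v =>
    match u, v with
    | Sum.inl i, Sum.inl j => (j : ℕ) = (i : ℕ) + 1
    | Sum.inl i, Sum.inr ⟨i', _, b⟩ => i = i' ∧ b = false
    | Sum.inr ⟨i, p, b⟩, Sum.inr ⟨i', p', b'⟩ =>
        i = i' ∧ HEq p p' ∧ b = false ∧ b' = true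
    | _, _ => False)

noncomputable instance (m : ℕ) (a : ℕ → ℕ) : DecidableRel (Tfam m a).Adj :=
  Classical.decRel _

/-- The Laplacian ratio `π(G) = per(L(G)) / ∏_v d(v)` (with rational values). -/
noncomputable def lapRatio {V : Type*} [Fintype V] [DecidableEq V]
    (G : SimpleGraph V) [DecidableRel G.Adj] : ℚ :=
  (G.lapMatrix ℚ).permanent / ∏ v, (G.degree v : ℚ)

/-- The degree of core vertex `xᵢ` (0-indexed) in `T(a₀,…,a_{m-1})`. -/
def coreDeg (m : ℕ) (a : ℕ → ℕ) (i : ℕ) : ℚ :=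
  (a i : ℚ) + (if i = 0 ∨ i = m - 1 then 1 else 2)

/-- The two-term recurrence `f₀ = 1`, `f₁ = 1 + a₁/(3d₁)`,
`fᵢ = (1 + aᵢ/(3dᵢ)) f_{i-1} + f_{i-2}/(d_{i-1} dᵢ)` (0-indexed data). -/
def fseq (a : ℕ → ℕ) (d : ℕ → ℚ) : ℕ → ℚ
  | 0 => 1
  | 1 => 1 + (a 0 : ℚ) / (3 * d 0)
  | (i + 2) =>
      (1 + (a (i + 1) : ℚ) / (3 * d (i + 1))) * fseq a d (i + 1)
        + fseq a d i / (d i * d (i + 1))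


set_option linter.unusedSectionVars false


open Finset Matrix

set_option linter.unusedSectionVars false

namespace CtAux

variable {V : Type*} [Fintype V] [DecidableEq V]

/-- identity-extended restriction of a matrix to a subset -/
def mask (S : Finset V) (M : Matrix V V ℚ) : Matrix V V ℚ :=
  fun v w => if v ∈ S ∧ w ∈ S then M v w else if v = w then 1 else 0

lemma mask_univ (M : Matrix V V ℚ) : mask Finset.univ M = M := by
  funext v w; simp [mask]

lemma mask_empty (M : Matrix V V ℚ) : mask ∅ M = 1 := by
  funext v w; simp [mask, Matrix.one_apply]

/-- delta function at x -/
def dl (x : V) : V → ℚ := fun j => if j = x then 1 else 0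

lemma permanent_updateColumn_add (M : Matrix V V ℚ) (x : V) (u v : V → ℚ) :
    (M.updateCol x (u + v)).permanent
      = (M.updateCol x u).permanent + (M.updateCol x v).permanent := by
  unfold Matrix.permanent
  rw [← Finset.sum_add_distrib]
  refine Finset.sum_congr rfl fun σ _ => ?_
  have hP : ∀ f : V → ℚ, ∏ i ∈ Finset.univ.erase x, (M.updateCol x f) (σ i) i
      = ∏ i ∈ Finset.univ.erase x, M (σ i) i :=
    fun f => Finset.prod_congr rfl fun i hi =>
      Matrix.updateCol_ne (Finset.ne_of_mem_erase hi)
  rw [← Finset.mul_prod_erase _ _ (Finset.mem_univ x),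
      ← Finset.mul_prod_erase _ _ (Finset.mem_univ x),
      ← Finset.mul_prod_erase _ _ (Finset.mem_univ x),
      Matrix.updateCol_self, Matrix.updateCol_self, Matrix.updateCol_self,
      hP, hP, hP, Pi.add_apply, add_mul]

/-- if column x is the delta at x, the rest of row x is irrelevant -/
lemma permanent_col_delta (N : Matrix V V ℚ) (x : V)
    (hc : ∀ j, N j x = dl x j) :
    N.permanent = (N.updateRow x (dl x)).permanent := by
  unfold Matrix.permanent
  refine Finset.sum_congr rfl fun σ _ => ?_
  by_cases hσ : σ x = x
  · refine Finset.prod_congr rfl fun i _ => ?_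
    rw [Matrix.updateRow_apply]
    split_ifs with h
    · have hix : i = x := σ.injective (by rw [h, hσ])
      subst hix
      rw [hc]
      simp [dl, h]
    · rfl
  · have h1 : ∏ i, (N.updateRow x (dl x)) (σ i) i = 0 :=
      Finset.prod_eq_zero (Finset.mem_univ x)
        (by rw [Matrix.updateRow_apply, if_neg hσ, hc]; simp [dl, hσ])
    have h2 : ∏ i, N (σ i) i = 0 :=
      Finset.prod_eq_zero (Finset.mem_univ x) (by rw [hc]; simp [dl, hσ])
    rw [h1, h2]

/-- row version -/
lemma permanent_row_delta (N : Matrix V V ℚ) (x : V)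
    (hr : ∀ j, N x j = dl x j) :
    N.permanent = (N.updateCol x (dl x)).permanent := by
  calc N.permanent = Nᵀ.permanent := (Matrix.permanent_transpose N).symm
    _ = (Nᵀ.updateRow x (dl x)).permanent := permanent_col_delta Nᵀ x (fun j => hr j)
    _ = (N.updateCol x (dl x)).permanent := by
        rw [Matrix.updateRow_transpose, Matrix.permanent_transpose]

lemma permanent_mask_isolated (M : Matrix V V ℚ) (S : Finset V) (x : V)
    (hx : x ∈ S)
    (hcol : ∀ j ∈ S, j ≠ x → M j x = 0) :
    (mask S M).permanent = M x x * (mask (S.erase x) M).permanent := by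
  set N := mask S M with hN
  have e1 : N = N.updateCol x (M x x • dl x) := by
    funext v u
    rw [Matrix.updateCol_apply]
    split_ifs with h
    · rw [h]
      simp only [Pi.smul_apply, dl, smul_eq_mul]
      by_cases hv : v = x
      · rw [hv]; simp [hN, mask, hx]
      · rw [if_neg hv, mul_zero]
        by_cases hvS : v ∈ S
        · simp [hN, mask, hvS, hx, hcol v hvS hv, hv]
        · simp [hN, mask, hvS, hv]
    · rfl
  rw [e1, Matrix.permanent_updateCol_smul]
  have e2 : (N.updateCol x (dl x)).permanent
      = ((N.updateCol x (dl x)).updateRow x (dl x)).permanent := by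
    apply permanent_col_delta
    intro j; rw [Matrix.updateCol_self]
  have e3 : ((N.updateCol x (dl x)).updateRow x (dl x)) = mask (S.erase x) M := by
    funext v u
    by_cases hv : v = x
    · rw [hv, Matrix.updateRow_self]
      by_cases hu : u = x
      · simp [mask, dl, hu, Finset.mem_erase]
      · have hux : ¬ x = u := fun h => hu h.symm
        simp [mask, dl, hu, hux, Finset.mem_erase]
    · rw [Matrix.updateRow_ne hv]
      by_cases hu : u = x
      · rw [hu, Matrix.updateCol_self]
        simp [mask, dl, hv, Finset.mem_erase]
      · rw [Matrix.updateCol_ne hu]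
        simp only [hN, mask, Finset.mem_erase]
        by_cases h1 : v ∈ S <;> by_cases h2 : u ∈ S <;> simp [hv, hu, h1, h2]
  rw [e2, e3]


lemma permanent_mask_pendant (M : Matrix V V ℚ) (S : Finset V) (x w : V)
    (hx : x ∈ S) (hw : w ∈ S) (hxw : x ≠ w)
    (hrow : ∀ j ∈ S, j ≠ x → j ≠ w → M x j = 0)
    (hcol : ∀ j ∈ S, j ≠ x → j ≠ w → M j x = 0) :
    (mask S M).permanent
      = M x x * (mask (S.erase x) M).permanent
        + M x w * M w x * (mask ((S.erase x).erase w) M).permanent := by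
  set N := mask S M with hN
  have hwx : ¬ w = x := fun h => hxw h.symm
  -- column decomposition
  have e1 : N = N.updateCol x (M x x • dl x + M w x • dl w) := by
    funext v u
    rw [Matrix.updateCol_apply]
    split_ifs with h
    · rw [h]
      simp only [Pi.add_apply, Pi.smul_apply, dl, smul_eq_mul]
      by_cases hv : v = x
      · rw [hv]; simp [hN, mask, hx, hwx, hxw]
      · by_cases hv2 : v = w
        · rw [hv2]; simp [hN, mask, hx, hw, hwx]
        · rw [if_neg hv, if_neg hv2, mul_zero, mul_zero, add_zero]
          by_cases hvS : v ∈ S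
          · simp [hN, mask, hvS, hx, hcol v hvS hv hv2, hv]
          · simp [hN, mask, hvS, hv]
    · rfl
  rw [e1, permanent_updateColumn_add, Matrix.permanent_updateCol_smul,
    Matrix.permanent_updateCol_smul]
  -- first term
  have eA : (N.updateCol x (dl x)).permanent = (mask (S.erase x) M).permanent := by
    rw [permanent_col_delta (N.updateCol x (dl x)) x (fun j => Matrix.updateCol_self ..)]
    congr 1
    funext v u
    by_cases hv : v = x
    · rw [hv, Matrix.updateRow_self]
      by_cases hu : u = x
      · simp [mask, dl, hu, Finset.mem_erase]
      · have hux : ¬ x = u := fun h => hu h.symm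
        simp [mask, dl, hu, hux, Finset.mem_erase]
    · rw [Matrix.updateRow_ne hv]
      by_cases hu : u = x
      · rw [hu, Matrix.updateCol_self]
        simp [mask, dl, hv, Finset.mem_erase]
      · rw [Matrix.updateCol_ne hu]
        simp only [hN, mask, Finset.mem_erase]
        by_cases h1 : v ∈ S <;> by_cases h2 : u ∈ S <;> simp [hv, hu, h1, h2]
  -- second term
  have eB : (N.updateCol x (dl w)).permanent
      = M x w * (mask ((S.erase x).erase w) M).permanent := by
    set B := N.updateCol x (dl w) with hB
    set C := B.submatrix id (Equiv.swap x w) with hC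
    have hCB : C.permanent = B.permanent := Matrix.permanent_permute_rows _ _
    -- row x of C is M x w • dl x
    have e2 : C = C.updateRow x (M x w • dl x) := by
      funext v u
      rw [Matrix.updateRow_apply]
      split_ifs with h
      · rw [h]
        simp only [Pi.smul_apply, dl, smul_eq_mul, hC, Matrix.submatrix_apply, id_eq]
        by_cases hu : u = x
        · rw [hu, if_pos rfl, Equiv.swap_apply_left]
          rw [hB, Matrix.updateCol_ne hwx]
          simp [hN, mask, hx, hw]
        · rw [if_neg hu, mul_zero]
          by_cases hu2 : u = w
          · rw [hu2, Equiv.swap_apply_right, hB, Matrix.updateCol_self]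
            simp [dl, hwx, hxw]
          · rw [Equiv.swap_apply_of_ne_of_ne hu hu2, hB, Matrix.updateCol_ne hu]
            by_cases huS : u ∈ S
            · simp [hN, mask, hx, huS, hrow u huS hu hu2]
            · have hxu : ¬ x = u := fun h => hu h.symm
              simp [hN, mask, huS, hu, hxu]
      · rfl
    have e2' : C.permanent = M x w * (C.updateRow x (dl x)).permanent := by
      conv_lhs => rw [e2]
      rw [Matrix.permanent_updateRow_smul]
    set D := C.updateRow x (dl x) with hD
    have e3 : D.permanent = (D.updateCol x (dl x)).permanent :=
      permanent_row_delta _ x (fun j => by rw [hD, Matrix.updateRow_self])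
    set E := D.updateCol x (dl x) with hE
    have e4 : E.permanent = (E.updateRow w (dl w)).permanent := by
      apply permanent_col_delta
      intro j
      rw [hE]
      by_cases hj : j = x
      · rw [hj, Matrix.updateCol_ne hwx, hD, Matrix.updateRow_self]
        try simp [dl, hxw, hwx]
      · rw [Matrix.updateCol_ne hwx, hD, Matrix.updateRow_ne hj, hC,
          Matrix.submatrix_apply, id_eq, Equiv.swap_apply_right, hB,
          Matrix.updateCol_self]
        try simp [dl]
    have e5 : E.updateRow w (dl w) = mask ((S.erase x).erase w) M := by
      funext v u
      by_cases hvw : v = w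
      · rw [hvw, Matrix.updateRow_self]
        by_cases hu : u = w
        · simp [mask, dl, hu, Finset.mem_erase]
        · have h' : ¬ w = u := fun h => hu h.symm
          simp [mask, dl, hu, h', Finset.mem_erase]
      · rw [Matrix.updateRow_ne hvw, hE]
        by_cases hu : u = x
        · rw [hu, Matrix.updateCol_self]
          have h' : ¬ x = u → True := fun _ => trivial
          by_cases hvx : v = x
          · simp [mask, dl, hvx, Finset.mem_erase]
          · have h2 : ¬ x = v := fun h => hvx h.symm
            simp [mask, dl, hvx, h2, Finset.mem_erase]
        · rw [Matrix.updateCol_ne hu, hD]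
          by_cases hvx : v = x
          · rw [hvx, Matrix.updateRow_self]
            have h2 : ¬ x = u := fun h => hu h.symm
            simp [mask, dl, hu, h2, Finset.mem_erase]
          · rw [Matrix.updateRow_ne hvx, hC, Matrix.submatrix_apply, id_eq]
            by_cases hu2 : u = w
            · rw [hu2, Equiv.swap_apply_right, hB, Matrix.updateCol_self]
              have h2 : ¬ w = v := fun h => hvw h.symm
              simp [mask, dl, hvx, hvw, h2, Finset.mem_erase]
            · rw [Equiv.swap_apply_of_ne_of_ne hu hu2, hB, Matrix.updateCol_ne hu, hN]
              simp only [mask, Finset.mem_erase]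
              by_cases h1 : v ∈ S <;> by_cases h2 : u ∈ S <;>
                simp [hvx, hvw, hu, hu2, h1, h2]
    rw [← hCB, e2', e3, e4, e5]
  rw [eA, eB]
  ring

end CtAux


open Finset

namespace CtH

def H (c : Finset (Fin 4)) (D : Fin 4 → ℚ) : ℚ :=
  let P1 : ℚ := if (0:Fin 4) ∈ c then D 0 else 1
  let P2 : ℚ := if (1:Fin 4) ∈ c then D 1 * P1 + (if (0:Fin 4) ∈ c then 1 else 0) else P1
  let P3 : ℚ := if (2:Fin 4) ∈ c then D 2 * P2 + (if (1:Fin 4) ∈ c then P1 else 0) else P2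
  if (3:Fin 4) ∈ c then D 3 * P3 + (if (2:Fin 4) ∈ c then P2 else 0) else P3

lemma H_indep (c : Finset (Fin 4)) (D : Fin 4 → ℚ) (i : Fin 4) (hi : i ∉ c) (x : ℚ) :
    H c (Function.update D i x) = H c D := by
  fin_cases i <;>
    by_cases h0 : (0:Fin 4) ∈ c <;> by_cases h1 : (1:Fin 4) ∈ c <;>
    by_cases h2 : (2:Fin 4) ∈ c <;> by_cases h3 : (3:Fin 4) ∈ c <;>
    simp_all [H, Function.update_apply]

lemma H_A (c : Finset (Fin 4)) (D : Fin 4 → ℚ) (i : Fin 4) (hi : i ∈ c) :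
    H c D = H c (Function.update D i (D i - 1/3)) + 1/3 * H (c.erase i) D := by
  fin_cases i <;>
    by_cases h0 : (0:Fin 4) ∈ c <;> by_cases h1 : (1:Fin 4) ∈ c <;>
    by_cases h2 : (2:Fin 4) ∈ c <;> by_cases h3 : (3:Fin 4) ∈ c <;>
    simp_all [H, Function.update_apply, Finset.mem_erase] <;> ring

end CtH

namespace CtGraph

variable (a : ℕ → ℕ)

abbrev Vt := Fin 4 ⊕ (Σ i : Fin 4, Fin (a i) × Bool)

lemma adj_cc (i j : Fin 4) :
    (Tfam 4 a).Adj (Sum.inl i) (Sum.inl j)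
      ↔ ((j:ℕ) = (i:ℕ) + 1 ∨ (i:ℕ) = (j:ℕ) + 1) := by
  rw [Tfam, SimpleGraph.fromRel_adj]
  constructor
  · rintro ⟨-, h | h⟩
    · exact Or.inl h
    · exact Or.inr h
  · intro h
    refine ⟨fun hh => ?_, h⟩
    rw [Sum.inl.injEq] at hh
    subst hh
    omega

lemma adj_cm (i j : Fin 4) (p : Fin (a j)) (b : Bool) :
    (Tfam 4 a).Adj (Sum.inl i) (Sum.inr ⟨j, p, b⟩) ↔ (i = j ∧ b = false) := by
  rw [Tfam, SimpleGraph.fromRel_adj]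
  constructor
  · rintro ⟨-, h | h⟩
    · exact h
    · exact h.elim
  · intro h
    exact ⟨by simp, Or.inl h⟩

lemma adj_mm (i j : Fin 4) (p : Fin (a i)) (q : Fin (a j)) (b c : Bool) :
    (Tfam 4 a).Adj (Sum.inr ⟨i, p, b⟩) (Sum.inr ⟨j, q, c⟩)
      ↔ (i = j ∧ HEq p q ∧ ((b = false ∧ c = true) ∨ (b = true ∧ c = false))) := by
  rw [Tfam, SimpleGraph.fromRel_adj]
  constructor
  · rintro ⟨-, h | h⟩
    · obtain ⟨h1, h2, h3, h4⟩ := h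
      exact ⟨h1, h2, Or.inl ⟨h3, h4⟩⟩
    · obtain ⟨h1, h2, h3, h4⟩ := h
      subst h1
      exact ⟨rfl, h2.symm, Or.inr ⟨h4, h3⟩⟩
  · rintro ⟨rfl, hpq, ⟨rfl, rfl⟩ | ⟨rfl, rfl⟩⟩
    · have : p = q := eq_of_heq hpq
      subst this
      exact ⟨by simp, Or.inl ⟨rfl, HEq.rfl, rfl, rfl⟩⟩
    · have : p = q := eq_of_heq hpq
      subst this
      exact ⟨by simp, Or.inr ⟨rfl, HEq.rfl, rfl, rfl⟩⟩

lemma nbr_leaf (i : Fin 4) (p : Fin (a i)) (v : Vt a) :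
    (Tfam 4 a).Adj (Sum.inr ⟨i, p, true⟩) v ↔ v = Sum.inr ⟨i, p, false⟩ := by
  cases v with
  | inl j =>
      rw [(Tfam 4 a).adj_comm, adj_cm]
      simp
  | inr s =>
      obtain ⟨j, q, c⟩ := s
      rw [adj_mm]
      constructor
      · rintro ⟨rfl, hpq, ⟨h1, -⟩ | ⟨-, rfl⟩⟩
        · exact absurd h1 (by simp)
        · have : p = q := eq_of_heq hpq
          subst this; rfl
      · intro h
        rw [Sum.inr.injEq] at h
        obtain ⟨rfl, h2⟩ := Sigma.mk.inj_iff.mp h.symm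
        have : (p, false) = (q, c) := eq_of_heq h2
        obtain ⟨rfl, rfl⟩ := Prod.mk.injEq .. ▸ this
        exact ⟨rfl, HEq.rfl, Or.inr ⟨rfl, rfl⟩⟩

lemma nbr_mid (i : Fin 4) (p : Fin (a i)) (v : Vt a) :
    (Tfam 4 a).Adj (Sum.inr ⟨i, p, false⟩) v
      ↔ (v = Sum.inr ⟨i, p, true⟩ ∨ v = Sum.inl i) := by
  cases v with
  | inl j =>
      rw [(Tfam 4 a).adj_comm, adj_cm]
      constructor
      · rintro ⟨rfl, -⟩; exact Or.inr rfl
      · rintro (h | h)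
        · exact absurd h (by simp)
        · rw [Sum.inl.injEq] at h
          exact ⟨h, rfl⟩
  | inr s =>
      obtain ⟨j, q, c⟩ := s
      rw [adj_mm]
      constructor
      · rintro ⟨rfl, hpq, ⟨-, rfl⟩ | ⟨h1, -⟩⟩
        · have : p = q := eq_of_heq hpq
          subst this; exact Or.inl rfl
        · exact absurd h1 (by simp)
      · rintro (h | h)
        · rw [Sum.inr.injEq] at h
          obtain ⟨rfl, h2⟩ := Sigma.mk.inj_iff.mp h
          have : (q, c) = (p, true) := eq_of_heq h2
          obtain ⟨rfl, rfl⟩ := Prod.mk.injEq .. ▸ this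
          exact ⟨rfl, HEq.rfl, Or.inl ⟨rfl, rfl⟩⟩
        · exact absurd h (by simp)

lemma nbr_core (i : Fin 4) (v : Vt a) :
    (Tfam 4 a).Adj (Sum.inl i) v
      ↔ ((∃ j : Fin 4, v = Sum.inl j ∧ ((j:ℕ) = (i:ℕ) + 1 ∨ (i:ℕ) = (j:ℕ) + 1))
          ∨ (∃ p : Fin (a i), v = Sum.inr ⟨i, p, false⟩)) := by
  cases v with
  | inl j =>
      rw [adj_cc]
      constructor
      · intro h; exact Or.inl ⟨j, rfl, h⟩
      · rintro (⟨j', hj, h⟩ | ⟨p, hp⟩)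
        · rw [Sum.inl.injEq] at hj; subst hj; exact h
        · exact absurd hp (by simp)
  | inr s =>
    obtain ⟨j, q, c⟩ := s
    rw [adj_cm]
    constructor
    · rintro ⟨rfl, rfl⟩
      exact Or.inr ⟨q, rfl⟩
    · rintro (⟨j', hj, h⟩ | ⟨p, hp⟩)
      · exact absurd hj (by simp)
      · rw [Sum.inr.injEq] at hp
        obtain ⟨rfl, h2⟩ := Sigma.mk.inj_iff.mp hp
        have : (q, c) = (p, false) := eq_of_heq h2
        obtain ⟨rfl, rfl⟩ := Prod.mk.injEq .. ▸ this
        exact ⟨rfl, rfl⟩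

lemma adj_cm' (i : Fin 4) (s : Σ j : Fin 4, Fin (a j) × Bool) :
    (Tfam 4 a).Adj (Sum.inl i) (Sum.inr s) ↔ (i = s.1 ∧ s.2.2 = false) := by
  obtain ⟨j, p, b⟩ := s
  exact adj_cm a i j p b

lemma deg_leaf (i : Fin 4) (p : Fin (a i)) :
    (Tfam 4 a).degree (Sum.inr ⟨i, p, true⟩) = 1 := by
  have h := (Tfam 4 a).degree_eq_sum_if_adj (R := ℕ) (Sum.inr ⟨i, p, true⟩)
  rw [Nat.cast_id] at h
  rw [h]
  simp [nbr_leaf]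

lemma deg_mid (i : Fin 4) (p : Fin (a i)) :
    (Tfam 4 a).degree (Sum.inr ⟨i, p, false⟩) = 2 := by
  have h := (Tfam 4 a).degree_eq_sum_if_adj (R := ℕ) (Sum.inr ⟨i, p, false⟩)
  rw [Nat.cast_id] at h
  rw [h]
  have key : ∀ v : Vt a, (if (Tfam 4 a).Adj (Sum.inr ⟨i, p, false⟩) v then (1:ℕ) else 0)
      = (if v = Sum.inr ⟨i, p, true⟩ then 1 else 0) + (if v = Sum.inl i then 1 else 0) := by
    intro v
    rw [if_congr (nbr_mid a i p v) rfl rfl]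
    by_cases h1 : v = Sum.inr ⟨i, p, true⟩
    · subst h1; simp
    · simp [h1]
  rw [Finset.sum_congr rfl (fun v _ => key v), Finset.sum_add_distrib]
  simp

lemma deg_core (i : Fin 4) :
    (Tfam 4 a).degree (Sum.inl i) = a i + (if i = 0 ∨ i = 3 then 1 else 2) := by
  have h := (Tfam 4 a).degree_eq_sum_if_adj (R := ℕ) (Sum.inl i)
  rw [Nat.cast_id] at h
  rw [h, Fintype.sum_sum_type]
  have h1 : (∑ j : Fin 4, if (Tfam 4 a).Adj (Sum.inl i) (Sum.inl j) then (1:ℕ) else 0)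
      = (if i = 0 ∨ i = 3 then 1 else 2) := by
    have rw1 : ∀ j : Fin 4, (if (Tfam 4 a).Adj (Sum.inl i) (Sum.inl j) then (1:ℕ) else 0)
        = (if ((j:ℕ) = (i:ℕ) + 1 ∨ (i:ℕ) = (j:ℕ) + 1) then (1:ℕ) else 0) :=
      fun j => if_congr (adj_cc a i j) rfl rfl
    rw [Fin.sum_univ_four]
    rw [rw1, rw1, rw1, rw1]
    fin_cases i <;> decide
  have h2 : (∑ s : Σ j : Fin 4, Fin (a j) × Bool,
        if (Tfam 4 a).Adj (Sum.inl i) (Sum.inr s) then (1:ℕ) else 0) = a i := by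
    have rw2 : ∀ s : Σ j : Fin 4, Fin (a j) × Bool,
        (if (Tfam 4 a).Adj (Sum.inl i) (Sum.inr s) then (1:ℕ) else 0)
          = (if (i = s.1 ∧ s.2.2 = false) then (1:ℕ) else 0) :=
      fun s => if_congr (adj_cm' a i s) rfl rfl
    rw [Finset.sum_congr rfl (fun s _ => rw2 s), ← Finset.univ_sigma_univ,
      Finset.sum_sigma]
    have inner : ∀ j : Fin 4, (∑ q : Fin (a j) × Bool,
        if (i = j ∧ q.2 = false) then (1:ℕ) else 0) = if i = j then a j else 0 := by
      intro j
      by_cases hij : i = j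
      · simp only [hij, true_and]
        have hf : (Finset.filter (fun x : Fin (a ↑j) × Bool => x.2 = false) Finset.univ)
            = Finset.univ ×ˢ {false} := by
          ext ⟨p, b⟩; simp [Finset.mem_product]
        rw [Finset.sum_boole, hf, Finset.card_product]
        simp
      · simp [hij]
    rw [Finset.sum_congr rfl (fun j _ => inner j)]
    simp
  rw [h1, h2, Nat.add_comm]

def dQ (i : Fin 4) : ℚ := (a i : ℚ) + (if i = 0 ∨ i = 3 then 1 else 2)

lemma deg_core_q (i : Fin 4) : ((Tfam 4 a).degree (Sum.inl i) : ℚ) = dQ a i := by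
  rw [deg_core, dQ]
  push_cast [apply_ite (Nat.cast : ℕ → ℚ)]
  norm_num

lemma prod_deg :
    (∏ v : Vt a, ((Tfam 4 a).degree v : ℚ))
      = 2 ^ (∑ i : Fin 4, a i) * ∏ i : Fin 4, dQ a i := by
  rw [Fintype.prod_sum_type]
  have h1 : (∏ i : Fin 4, ((Tfam 4 a).degree (Sum.inl i) : ℚ)) = ∏ i : Fin 4, dQ a i :=
    Finset.prod_congr rfl (fun i _ => deg_core_q a i)
  have h2 : (∏ s : Σ j : Fin 4, Fin (a j) × Bool, ((Tfam 4 a).degree (Sum.inr s) : ℚ))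
      = 2 ^ (∑ i : Fin 4, a i) := by
    rw [← Finset.univ_sigma_univ, Finset.prod_sigma]
    have inner : ∀ j : Fin 4, (∏ q : Fin (a j) × Bool,
        ((Tfam 4 a).degree (Sum.inr ⟨j, q⟩) : ℚ)) = 2 ^ (a j) := by
      intro j
      rw [Fintype.prod_prod_type]
      have : ∀ p : Fin (a j), (∏ b : Bool, ((Tfam 4 a).degree (Sum.inr ⟨j, p, b⟩) : ℚ)) = 2 := by
        intro p
        rw [Fintype.prod_bool]
        rw [deg_leaf, deg_mid]
        norm_num
      rw [Finset.prod_congr rfl (fun p _ => this p)]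
      simp
    rw [Finset.prod_congr rfl (fun j _ => inner j)]
    rw [Finset.prod_pow_eq_pow_sum]
  rw [h1, h2, mul_comm]

noncomputable def LM : Matrix (Vt a) (Vt a) ℚ := (Tfam 4 a).lapMatrix ℚ

lemma LM_diag (v : Vt a) : LM a v v = ((Tfam 4 a).degree v : ℚ) := by
  simp [LM, SimpleGraph.lapMatrix, SimpleGraph.degMatrix, Matrix.sub_apply]

lemma LM_off (v w : Vt a) (h : v ≠ w) :
    LM a v w = if (Tfam 4 a).Adj v w then -1 else 0 := by
  simp only [LM, SimpleGraph.lapMatrix, SimpleGraph.degMatrix, Matrix.sub_apply,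
    Matrix.diagonal_apply_ne _ h, SimpleGraph.adjMatrix_apply]
  split_ifs <;> ring

lemma LM_leaf_diag (i : Fin 4) (p : Fin (a i)) :
    LM a (Sum.inr ⟨i, p, true⟩) (Sum.inr ⟨i, p, true⟩) = 1 := by
  rw [LM_diag, deg_leaf]; norm_num

lemma LM_mid_diag (i : Fin 4) (p : Fin (a i)) :
    LM a (Sum.inr ⟨i, p, false⟩) (Sum.inr ⟨i, p, false⟩) = 2 := by
  rw [LM_diag, deg_mid]; norm_num

lemma LM_core_diag (i : Fin 4) : LM a (Sum.inl i) (Sum.inl i) = dQ a i := by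
  rw [LM_diag, deg_core_q]

end CtGraph

namespace CtGraph

open CtAux

variable (a : ℕ → ℕ)

def Pmem (c : Finset (Fin 4)) (k : Fin 4 → ℕ) : Vt a → Prop
  | Sum.inl i => i ∈ c
  | Sum.inr s => (s.2.1 : ℕ) < k s.1

instance (c : Finset (Fin 4)) (k : Fin 4 → ℕ) : DecidablePred (Pmem a c k) := fun v =>
  match v with
  | Sum.inl i => inferInstanceAs (Decidable (i ∈ c))
  | Sum.inr s => inferInstanceAs (Decidable ((s.2.1 : ℕ) < k s.1))

def Sset (c : Finset (Fin 4)) (k : Fin 4 → ℕ) : Finset (Vt a) :=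
  Finset.univ.filter (Pmem a c k)

lemma mem_Sset_core (c : Finset (Fin 4)) (k : Fin 4 → ℕ) (i : Fin 4) :
    Sum.inl i ∈ Sset a c k ↔ i ∈ c := by
  simp [Sset, Pmem]

lemma mem_Sset_pend (c : Finset (Fin 4)) (k : Fin 4 → ℕ) (i : Fin 4) (p : Fin (a i)) (b : Bool) :
    Sum.inr ⟨i, p, b⟩ ∈ Sset a c k ↔ (p : ℕ) < k i := by
  simp [Sset, Pmem]

lemma Sset_univ : Sset a Finset.univ (fun i => a i) = Finset.univ := by
  ext v
  cases v with
  | inl i => simp [mem_Sset_core]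
  | inr s => obtain ⟨i, p, b⟩ := s; simp [mem_Sset_pend]

lemma erase_core (c : Finset (Fin 4)) (k : Fin 4 → ℕ) (i : Fin 4) :
    (Sset a c k).erase (Sum.inl i) = Sset a (c.erase i) k := by
  ext v
  cases v with
  | inl j =>
      simp [Finset.mem_erase, mem_Sset_core, Sum.inl.injEq, and_comm]
  | inr s =>
      obtain ⟨j, q, b⟩ := s
      simp [Finset.mem_erase, mem_Sset_pend]

noncomputable def g (c : Finset (Fin 4)) (k : Fin 4 → ℕ) : ℚ :=
  (mask (Sset a c k) (LM a)).permanent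

lemma g_empty (k : Fin 4 → ℕ) (hk : ∀ i, k i = 0) : g a ∅ k = 1 := by
  have hS : Sset a ∅ k = ∅ := by
    ext v
    cases v with
    | inl i => simp [mem_Sset_core]
    | inr s => obtain ⟨i, p, b⟩ := s; simp [mem_Sset_pend, hk]
  rw [g, hS, mask_empty, Matrix.permanent_one]

lemma erase_pair (c : Finset (Fin 4)) (k : Fin 4 → ℕ) (i : Fin 4) (hka : k i ≤ a i) (hki : 0 < k i) :
    ((Sset a c k).erase (Sum.inr ⟨i, ⟨k i - 1, by omega⟩, true⟩)).erase
        (Sum.inr ⟨i, ⟨k i - 1, by omega⟩, false⟩)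
      = Sset a c (Function.update k i (k i - 1)) := by
  ext v
  cases v with
  | inl j => simp [Finset.mem_erase, mem_Sset_core]
  | inr s =>
      obtain ⟨j, q, b⟩ := s
      by_cases hj : j = i
      · subst hj
        simp only [Finset.mem_erase, mem_Sset_pend, Sum.inr.injEq, Sigma.mk.inj_iff,
          heq_eq_eq, Prod.mk.injEq, Function.update_self, true_and]
        cases b <;> simp [Fin.ext_iff] <;> omega
      · have h1 : ¬ ((⟨j, q, b⟩ : Σ i : Fin 4, Fin (a i) × Bool)
            = ⟨i, ⟨k i - 1, by omega⟩, false⟩) := by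
          simp [Sigma.mk.inj_iff, hj]
        have h2 : ¬ ((⟨j, q, b⟩ : Σ i : Fin 4, Fin (a i) × Bool)
            = ⟨i, ⟨k i - 1, by omega⟩, true⟩) := by
          simp [Sigma.mk.inj_iff, hj]
        simp [Finset.mem_erase, mem_Sset_pend, h1, h2, Function.update_of_ne hj]

end CtGraph

namespace CtGraph
open CtAux

variable (a : ℕ → ℕ)

lemma gA (c : Finset (Fin 4)) (k : Fin 4 → ℕ) (i : Fin 4)
    (hka : k i ≤ a i) (hki : 0 < k i) (hic : i ∈ c) :
    g a c k = 3 * g a c (Function.update k i (k i - 1))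
      + g a (c.erase i) (Function.update k i (k i - 1)) := by
  have hpa : k i - 1 < a i := by omega
  set p0 : Fin (a i) := ⟨k i - 1, hpa⟩ with hp0
  set x : Vt a := Sum.inr ⟨i, p0, true⟩ with hx
  set w : Vt a := Sum.inr ⟨i, p0, false⟩ with hw
  set u : Vt a := Sum.inl i with hu
  have hxw : x ≠ w := by simp [hx, hw]
  have hxS : x ∈ Sset a c k := by
    rw [hx, mem_Sset_pend]; show k i - 1 < k i; omega
  have hwS : w ∈ Sset a c k := by
    rw [hw, mem_Sset_pend]; show k i - 1 < k i; omega
  have hrow : ∀ j ∈ Sset a c k, j ≠ x → j ≠ w → LM a x j = 0 := by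
    intro j hj hjx hjw
    rw [LM_off a x j (fun h => hjx h.symm), if_neg]
    intro hadj
    exact hjw ((nbr_leaf a i p0 j).mp hadj)
  have hcol : ∀ j ∈ Sset a c k, j ≠ x → j ≠ w → LM a j x = 0 := by
    intro j hj hjx hjw
    rw [LM_off a j x hjx, if_neg]
    intro hadj
    exact hjw ((nbr_leaf a i p0 j).mp ((Tfam 4 a).adj_comm .. |>.mp hadj))
  have step1 := permanent_mask_pendant (LM a) (Sset a c k) x w hxS hwS hxw hrow hcol
  have hLxx : LM a x x = 1 := LM_leaf_diag a i p0
  have hadjxw : (Tfam 4 a).Adj x w := (nbr_leaf a i p0 w).mpr rfl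
  have hLxw : LM a x w = -1 := by rw [LM_off a x w hxw, if_pos hadjxw]
  have hLwx : LM a w x = -1 := by
    rw [LM_off a w x (fun h => hxw h.symm), if_pos ((Tfam 4 a).adj_comm .. |>.mp hadjxw)]
  -- second expansion on T = (Sset a c k).erase x
  set T := (Sset a c k).erase x with hT
  have hwT : w ∈ T := Finset.mem_erase.mpr ⟨fun h => hxw h.symm, hwS⟩
  have huT : u ∈ T := Finset.mem_erase.mpr ⟨by simp [hu, hx], by rw [hu, mem_Sset_core]; exact hic⟩
  have hwu : w ≠ u := by simp [hw, hu]
  have hrow2 : ∀ j ∈ T, j ≠ w → j ≠ u → LM a w j = 0 := by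
    intro j hj hjw hju
    rw [LM_off a w j (fun h => hjw h.symm), if_neg]
    intro hadj
    rcases (nbr_mid a i p0 j).mp hadj with h | h
    · exact (Finset.mem_erase.mp hj).1 h
    · exact hju h
  have hcol2 : ∀ j ∈ T, j ≠ w → j ≠ u → LM a j w = 0 := by
    intro j hj hjw hju
    rw [LM_off a j w hjw, if_neg]
    intro hadj
    rcases (nbr_mid a i p0 j).mp ((Tfam 4 a).adj_comm .. |>.mp hadj) with h | h
    · exact (Finset.mem_erase.mp hj).1 h
    · exact hju h
  have step2 := permanent_mask_pendant (LM a) T w u hwT huT hwu hrow2 hcol2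
  have hLww : LM a w w = 2 := LM_mid_diag a i p0
  have hadjwu : (Tfam 4 a).Adj w u := (nbr_mid a i p0 u).mpr (Or.inr rfl)
  have hLwu : LM a w u = -1 := by rw [LM_off a w u hwu, if_pos hadjwu]
  have hLuw : LM a u w = -1 := by
    rw [LM_off a u w (fun h => hwu h.symm), if_pos ((Tfam 4 a).adj_comm .. |>.mp hadjwu)]
  have hE1 : (T.erase w) = Sset a c (Function.update k i (k i - 1)) :=
    erase_pair a c k i hka hki
  have hE2 : (Sset a c (Function.update k i (k i - 1))).erase u
      = Sset a (c.erase i) (Function.update k i (k i - 1)) := by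
    rw [hu, erase_core]
  rw [hE1] at step2
  rw [hE2] at step2
  rw [hE1] at step1
  show (mask (Sset a c k) (LM a)).permanent = _
  rw [step1, step2, hLxx, hLxw, hLwx, hLww, hLwu, hLuw]
  show _ = 3 * (mask (Sset a c (Function.update k i (k i - 1))) (LM a)).permanent
      + (mask (Sset a (c.erase i) (Function.update k i (k i - 1))) (LM a)).permanent
  ring

lemma gB (c : Finset (Fin 4)) (k : Fin 4 → ℕ) (i : Fin 4)
    (hka : k i ≤ a i) (hki : 0 < k i) (hic : i ∉ c) :
    g a c k = 3 * g a c (Function.update k i (k i - 1)) := by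
  have hpa : k i - 1 < a i := by omega
  set p0 : Fin (a i) := ⟨k i - 1, hpa⟩ with hp0
  set x : Vt a := Sum.inr ⟨i, p0, true⟩ with hx
  set w : Vt a := Sum.inr ⟨i, p0, false⟩ with hw
  set u : Vt a := Sum.inl i with hu
  have hxw : x ≠ w := by simp [hx, hw]
  have hxS : x ∈ Sset a c k := by
    rw [hx, mem_Sset_pend]; show k i - 1 < k i; omega
  have hwS : w ∈ Sset a c k := by
    rw [hw, mem_Sset_pend]; show k i - 1 < k i; omega
  have hrow : ∀ j ∈ Sset a c k, j ≠ x → j ≠ w → LM a x j = 0 := by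
    intro j hj hjx hjw
    rw [LM_off a x j (fun h => hjx h.symm), if_neg]
    intro hadj
    exact hjw ((nbr_leaf a i p0 j).mp hadj)
  have hcol : ∀ j ∈ Sset a c k, j ≠ x → j ≠ w → LM a j x = 0 := by
    intro j hj hjx hjw
    rw [LM_off a j x hjx, if_neg]
    intro hadj
    exact hjw ((nbr_leaf a i p0 j).mp ((Tfam 4 a).adj_comm .. |>.mp hadj))
  have step1 := permanent_mask_pendant (LM a) (Sset a c k) x w hxS hwS hxw hrow hcol
  have hLxx : LM a x x = 1 := LM_leaf_diag a i p0
  have hadjxw : (Tfam 4 a).Adj x w := (nbr_leaf a i p0 w).mpr rfl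
  have hLxw : LM a x w = -1 := by rw [LM_off a x w hxw, if_pos hadjxw]
  have hLwx : LM a w x = -1 := by
    rw [LM_off a w x (fun h => hxw h.symm), if_pos ((Tfam 4 a).adj_comm .. |>.mp hadjxw)]
  set T := (Sset a c k).erase x with hT
  have hwT : w ∈ T := Finset.mem_erase.mpr ⟨fun h => hxw h.symm, hwS⟩
  have hcol2 : ∀ j ∈ T, j ≠ w → LM a j w = 0 := by
    intro j hj hjw
    rw [LM_off a j w hjw, if_neg]
    intro hadj
    rcases (nbr_mid a i p0 j).mp ((Tfam 4 a).adj_comm .. |>.mp hadj) with h | h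
    · exact (Finset.mem_erase.mp hj).1 h
    · rw [h] at hj
      rw [hT, Finset.mem_erase, mem_Sset_core] at hj
      exact hic hj.2
  have step2 := permanent_mask_isolated (LM a) T w hwT hcol2
  have hLww : LM a w w = 2 := LM_mid_diag a i p0
  have hE1 : (T.erase w) = Sset a c (Function.update k i (k i - 1)) :=
    erase_pair a c k i hka hki
  rw [hE1] at step2
  rw [hE1] at step1
  show (mask (Sset a c k) (LM a)).permanent = _
  rw [step1, step2, hLxx, hLxw, hLwx, hLww]
  show _ = 3 * (mask (Sset a c (Function.update k i (k i - 1))) (LM a)).permanent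
  ring

lemma gC_pend (c : Finset (Fin 4)) (k : Fin 4 → ℕ) (i inext : Fin 4)
    (hic : i ∈ c) (hinext : inext ∈ c) (hval : (inext : ℕ) = (i : ℕ) + 1)
    (hki : k i = 0) (hprev : ∀ j ∈ c, (j : ℕ) + 1 ≠ (i : ℕ)) :
    g a c k = dQ a i * g a (c.erase i) k + g a ((c.erase i).erase inext) k := by
  set u : Vt a := Sum.inl i with hu
  set unext : Vt a := Sum.inl inext with hun
  have hne : u ≠ unext := by
    simp only [hu, hun, ne_eq, Sum.inl.injEq]
    intro h; rw [h] at hval; omega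
  have huS : u ∈ Sset a c k := by rw [hu, mem_Sset_core]; exact hic
  have hunS : unext ∈ Sset a c k := by rw [hun, mem_Sset_core]; exact hinext
  have key : ∀ j ∈ Sset a c k, j ≠ u → j ≠ unext → ¬ (Tfam 4 a).Adj u j := by
    intro j hj hju hjun hadj
    rcases (nbr_core a i j).mp hadj with ⟨j', hj', hv⟩ | ⟨p, hp⟩
    · subst hj'
      rw [mem_Sset_core] at hj
      rcases hv with h | h
      · apply hjun
        rw [hun, Sum.inl.injEq]
        exact Fin.ext (by omega)
      · exact hprev j' hj (by omega)
    · subst hp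
      rw [mem_Sset_pend, hki] at hj
      omega
  have hrow : ∀ j ∈ Sset a c k, j ≠ u → j ≠ unext → LM a u j = 0 := by
    intro j hj hju hjun
    rw [LM_off a u j (fun h => hju h.symm), if_neg (key j hj hju hjun)]
  have hcol : ∀ j ∈ Sset a c k, j ≠ u → j ≠ unext → LM a j u = 0 := by
    intro j hj hju hjun
    rw [LM_off a j u hju, if_neg]
    intro hadj
    exact key j hj hju hjun ((Tfam 4 a).adj_comm .. |>.mp hadj)
  have step := permanent_mask_pendant (LM a) (Sset a c k) u unext huS hunS hne hrow hcol
  have hadj : (Tfam 4 a).Adj u unext := by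
    rw [hu, hun, adj_cc]; exact Or.inl hval
  have h1 : LM a u unext = -1 := by rw [LM_off a u unext hne, if_pos hadj]
  have h2 : LM a unext u = -1 := by
    rw [LM_off a unext u (fun h => hne h.symm), if_pos ((Tfam 4 a).adj_comm .. |>.mp hadj)]
  have hE1 : (Sset a c k).erase u = Sset a (c.erase i) k := by rw [hu, erase_core]
  have hE2 : (Sset a (c.erase i) k).erase unext = Sset a ((c.erase i).erase inext) k := by
    rw [hun, erase_core]
  rw [hE1] at step
  rw [hE2] at step
  show (mask (Sset a c k) (LM a)).permanent = _
  rw [step, h1, h2, hu, LM_core_diag]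
  show _ = dQ a i * (mask (Sset a (c.erase i) k) (LM a)).permanent
      + (mask (Sset a ((c.erase i).erase inext) k) (LM a)).permanent
  ring

lemma gC_iso (c : Finset (Fin 4)) (k : Fin 4 → ℕ) (i : Fin 4)
    (hic : i ∈ c) (hki : k i = 0)
    (hprev : ∀ j ∈ c, (j : ℕ) + 1 ≠ (i : ℕ))
    (hnext : ∀ j ∈ c, (i : ℕ) + 1 ≠ (j : ℕ)) :
    g a c k = dQ a i * g a (c.erase i) k := by
  set u : Vt a := Sum.inl i with hu
  have huS : u ∈ Sset a c k := by rw [hu, mem_Sset_core]; exact hic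
  have hcol : ∀ j ∈ Sset a c k, j ≠ u → LM a j u = 0 := by
    intro j hj hju
    rw [LM_off a j u hju, if_neg]
    intro hadj
    rcases (nbr_core a i j).mp ((Tfam 4 a).adj_comm .. |>.mp hadj) with ⟨j', hj', hv⟩ | ⟨p, hp⟩
    · subst hj'
      rw [mem_Sset_core] at hj
      rcases hv with h | h
      · exact hnext j' hj (by omega)
      · exact hprev j' hj (by omega)
    · subst hp
      rw [mem_Sset_pend, hki] at hj
      omega
  have step := permanent_mask_isolated (LM a) (Sset a c k) u huS hcol
  have hE1 : (Sset a c k).erase u = Sset a (c.erase i) k := by rw [hu, erase_core]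
  rw [hE1] at step
  show (mask (Sset a c k) (LM a)).permanent = _
  rw [step, hu, LM_core_diag]
  rfl

end CtGraph

namespace CtGraph
open CtAux
variable (a : ℕ → ℕ)
lemma gbase (c : Finset (Fin 4)) : g a c (fun _ => 0) = CtH.H c (dQ a) := by
  have h_e : g a (∅ : Finset (Fin 4)) (fun _ => 0) = CtH.H ∅ (dQ a) := by
    rw [g_empty a _ (fun _ => rfl)]
    simp [CtH.H]
  have h_0 : g a ({0} : Finset (Fin 4)) (fun _ => 0) = CtH.H ({0} : Finset (Fin 4)) (dQ a) := by
    rw [gC_iso a ({0} : Finset (Fin 4)) (fun _ => 0) 0 (by decide) rfl (by decide) (by decide),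
      show (({0} : Finset (Fin 4))).erase 0 = (∅ : Finset (Fin 4)) from by decide,
      h_e]
    simp [CtH.H]
    try ring
  have h_1 : g a ({1} : Finset (Fin 4)) (fun _ => 0) = CtH.H ({1} : Finset (Fin 4)) (dQ a) := by
    rw [gC_iso a ({1} : Finset (Fin 4)) (fun _ => 0) 1 (by decide) rfl (by decide) (by decide),
      show (({1} : Finset (Fin 4))).erase 1 = (∅ : Finset (Fin 4)) from by decide,
      h_e]
    simp [CtH.H]
    try ring
  have h_2 : g a ({2} : Finset (Fin 4)) (fun _ => 0) = CtH.H ({2} : Finset (Fin 4)) (dQ a) := by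
    rw [gC_iso a ({2} : Finset (Fin 4)) (fun _ => 0) 2 (by decide) rfl (by decide) (by decide),
      show (({2} : Finset (Fin 4))).erase 2 = (∅ : Finset (Fin 4)) from by decide,
      h_e]
    simp [CtH.H]
    try ring
  have h_3 : g a ({3} : Finset (Fin 4)) (fun _ => 0) = CtH.H ({3} : Finset (Fin 4)) (dQ a) := by
    rw [gC_iso a ({3} : Finset (Fin 4)) (fun _ => 0) 3 (by decide) rfl (by decide) (by decide),
      show (({3} : Finset (Fin 4))).erase 3 = (∅ : Finset (Fin 4)) from by decide,
      h_e]
    simp [CtH.H]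
    try ring
  have h_01 : g a ({0, 1} : Finset (Fin 4)) (fun _ => 0) = CtH.H ({0, 1} : Finset (Fin 4)) (dQ a) := by
    rw [gC_pend a ({0, 1} : Finset (Fin 4)) (fun _ => 0) 0 1 (by decide) (by decide) (by decide) rfl (by decide),
      show (({0, 1} : Finset (Fin 4))).erase 0 = ({1} : Finset (Fin 4)) from by decide,
      show (({1} : Finset (Fin 4))).erase 1 = (∅ : Finset (Fin 4)) from by decide,
      h_1, h_e]
    simp [CtH.H]
    try ring
  have h_02 : g a ({0, 2} : Finset (Fin 4)) (fun _ => 0) = CtH.H ({0, 2} : Finset (Fin 4)) (dQ a) := by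
    rw [gC_iso a ({0, 2} : Finset (Fin 4)) (fun _ => 0) 0 (by decide) rfl (by decide) (by decide),
      show (({0, 2} : Finset (Fin 4))).erase 0 = ({2} : Finset (Fin 4)) from by decide,
      h_2]
    simp [CtH.H]
    try ring
  have h_03 : g a ({0, 3} : Finset (Fin 4)) (fun _ => 0) = CtH.H ({0, 3} : Finset (Fin 4)) (dQ a) := by
    rw [gC_iso a ({0, 3} : Finset (Fin 4)) (fun _ => 0) 0 (by decide) rfl (by decide) (by decide),
      show (({0, 3} : Finset (Fin 4))).erase 0 = ({3} : Finset (Fin 4)) from by decide,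
      h_3]
    simp [CtH.H]
    try ring
  have h_12 : g a ({1, 2} : Finset (Fin 4)) (fun _ => 0) = CtH.H ({1, 2} : Finset (Fin 4)) (dQ a) := by
    rw [gC_pend a ({1, 2} : Finset (Fin 4)) (fun _ => 0) 1 2 (by decide) (by decide) (by decide) rfl (by decide),
      show (({1, 2} : Finset (Fin 4))).erase 1 = ({2} : Finset (Fin 4)) from by decide,
      show (({2} : Finset (Fin 4))).erase 2 = (∅ : Finset (Fin 4)) from by decide,
      h_2, h_e]
    simp [CtH.H]
    try ring
  have h_13 : g a ({1, 3} : Finset (Fin 4)) (fun _ => 0) = CtH.H ({1, 3} : Finset (Fin 4)) (dQ a) := by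
    rw [gC_iso a ({1, 3} : Finset (Fin 4)) (fun _ => 0) 1 (by decide) rfl (by decide) (by decide),
      show (({1, 3} : Finset (Fin 4))).erase 1 = ({3} : Finset (Fin 4)) from by decide,
      h_3]
    simp [CtH.H]
    try ring
  have h_23 : g a ({2, 3} : Finset (Fin 4)) (fun _ => 0) = CtH.H ({2, 3} : Finset (Fin 4)) (dQ a) := by
    rw [gC_pend a ({2, 3} : Finset (Fin 4)) (fun _ => 0) 2 3 (by decide) (by decide) (by decide) rfl (by decide),
      show (({2, 3} : Finset (Fin 4))).erase 2 = ({3} : Finset (Fin 4)) from by decide,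
      show (({3} : Finset (Fin 4))).erase 3 = (∅ : Finset (Fin 4)) from by decide,
      h_3, h_e]
    simp [CtH.H]
    try ring
  have h_012 : g a ({0, 1, 2} : Finset (Fin 4)) (fun _ => 0) = CtH.H ({0, 1, 2} : Finset (Fin 4)) (dQ a) := by
    rw [gC_pend a ({0, 1, 2} : Finset (Fin 4)) (fun _ => 0) 0 1 (by decide) (by decide) (by decide) rfl (by decide),
      show (({0, 1, 2} : Finset (Fin 4))).erase 0 = ({1, 2} : Finset (Fin 4)) from by decide,
      show (({1, 2} : Finset (Fin 4))).erase 1 = ({2} : Finset (Fin 4)) from by decide,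
      h_12, h_2]
    simp [CtH.H]
    try ring
  have h_013 : g a ({0, 1, 3} : Finset (Fin 4)) (fun _ => 0) = CtH.H ({0, 1, 3} : Finset (Fin 4)) (dQ a) := by
    rw [gC_pend a ({0, 1, 3} : Finset (Fin 4)) (fun _ => 0) 0 1 (by decide) (by decide) (by decide) rfl (by decide),
      show (({0, 1, 3} : Finset (Fin 4))).erase 0 = ({1, 3} : Finset (Fin 4)) from by decide,
      show (({1, 3} : Finset (Fin 4))).erase 1 = ({3} : Finset (Fin 4)) from by decide,
      h_13, h_3]
    simp [CtH.H]
    try ring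
  have h_023 : g a ({0, 2, 3} : Finset (Fin 4)) (fun _ => 0) = CtH.H ({0, 2, 3} : Finset (Fin 4)) (dQ a) := by
    rw [gC_iso a ({0, 2, 3} : Finset (Fin 4)) (fun _ => 0) 0 (by decide) rfl (by decide) (by decide),
      show (({0, 2, 3} : Finset (Fin 4))).erase 0 = ({2, 3} : Finset (Fin 4)) from by decide,
      h_23]
    simp [CtH.H]
    try ring
  have h_123 : g a ({1, 2, 3} : Finset (Fin 4)) (fun _ => 0) = CtH.H ({1, 2, 3} : Finset (Fin 4)) (dQ a) := by
    rw [gC_pend a ({1, 2, 3} : Finset (Fin 4)) (fun _ => 0) 1 2 (by decide) (by decide) (by decide) rfl (by decide),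
      show (({1, 2, 3} : Finset (Fin 4))).erase 1 = ({2, 3} : Finset (Fin 4)) from by decide,
      show (({2, 3} : Finset (Fin 4))).erase 2 = ({3} : Finset (Fin 4)) from by decide,
      h_23, h_3]
    simp [CtH.H]
    try ring
  have h_0123 : g a ({0, 1, 2, 3} : Finset (Fin 4)) (fun _ => 0) = CtH.H ({0, 1, 2, 3} : Finset (Fin 4)) (dQ a) := by
    rw [gC_pend a ({0, 1, 2, 3} : Finset (Fin 4)) (fun _ => 0) 0 1 (by decide) (by decide) (by decide) rfl (by decide),
      show (({0, 1, 2, 3} : Finset (Fin 4))).erase 0 = ({1, 2, 3} : Finset (Fin 4)) from by decide,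
      show (({1, 2, 3} : Finset (Fin 4))).erase 1 = ({2, 3} : Finset (Fin 4)) from by decide,
      h_123, h_23]
    simp [CtH.H]
    try ring
  by_cases h0 : (0:Fin 4) ∈ c <;> by_cases h1 : (1:Fin 4) ∈ c <;>
    by_cases h2 : (2:Fin 4) ∈ c <;> by_cases h3 : (3:Fin 4) ∈ c
  · rw [show c = ({0, 1, 2, 3} : Finset (Fin 4)) from by
      ext j; fin_cases j
      · exact iff_of_true h0 (by decide)
      · exact iff_of_true h1 (by decide)
      · exact iff_of_true h2 (by decide)
      · exact iff_of_true h3 (by decide)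
      ]
    exact h_0123
  · rw [show c = ({0, 1, 2} : Finset (Fin 4)) from by
      ext j; fin_cases j
      · exact iff_of_true h0 (by decide)
      · exact iff_of_true h1 (by decide)
      · exact iff_of_true h2 (by decide)
      · exact iff_of_false h3 (by decide)
      ]
    exact h_012
  · rw [show c = ({0, 1, 3} : Finset (Fin 4)) from by
      ext j; fin_cases j
      · exact iff_of_true h0 (by decide)
      · exact iff_of_true h1 (by decide)
      · exact iff_of_false h2 (by decide)
      · exact iff_of_true h3 (by decide)
      ]
    exact h_013
  · rw [show c = ({0, 1} : Finset (Fin 4)) from by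
      ext j; fin_cases j
      · exact iff_of_true h0 (by decide)
      · exact iff_of_true h1 (by decide)
      · exact iff_of_false h2 (by decide)
      · exact iff_of_false h3 (by decide)
      ]
    exact h_01
  · rw [show c = ({0, 2, 3} : Finset (Fin 4)) from by
      ext j; fin_cases j
      · exact iff_of_true h0 (by decide)
      · exact iff_of_false h1 (by decide)
      · exact iff_of_true h2 (by decide)
      · exact iff_of_true h3 (by decide)
      ]
    exact h_023
  · rw [show c = ({0, 2} : Finset (Fin 4)) from by
      ext j; fin_cases j
      · exact iff_of_true h0 (by decide)
      · exact iff_of_false h1 (by decide)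
      · exact iff_of_true h2 (by decide)
      · exact iff_of_false h3 (by decide)
      ]
    exact h_02
  · rw [show c = ({0, 3} : Finset (Fin 4)) from by
      ext j; fin_cases j
      · exact iff_of_true h0 (by decide)
      · exact iff_of_false h1 (by decide)
      · exact iff_of_false h2 (by decide)
      · exact iff_of_true h3 (by decide)
      ]
    exact h_03
  · rw [show c = ({0} : Finset (Fin 4)) from by
      ext j; fin_cases j
      · exact iff_of_true h0 (by decide)
      · exact iff_of_false h1 (by decide)
      · exact iff_of_false h2 (by decide)
      · exact iff_of_false h3 (by decide)
      ]
    exact h_0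
  · rw [show c = ({1, 2, 3} : Finset (Fin 4)) from by
      ext j; fin_cases j
      · exact iff_of_false h0 (by decide)
      · exact iff_of_true h1 (by decide)
      · exact iff_of_true h2 (by decide)
      · exact iff_of_true h3 (by decide)
      ]
    exact h_123
  · rw [show c = ({1, 2} : Finset (Fin 4)) from by
      ext j; fin_cases j
      · exact iff_of_false h0 (by decide)
      · exact iff_of_true h1 (by decide)
      · exact iff_of_true h2 (by decide)
      · exact iff_of_false h3 (by decide)
      ]
    exact h_12
  · rw [show c = ({1, 3} : Finset (Fin 4)) from by
      ext j; fin_cases j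
      · exact iff_of_false h0 (by decide)
      · exact iff_of_true h1 (by decide)
      · exact iff_of_false h2 (by decide)
      · exact iff_of_true h3 (by decide)
      ]
    exact h_13
  · rw [show c = ({1} : Finset (Fin 4)) from by
      ext j; fin_cases j
      · exact iff_of_false h0 (by decide)
      · exact iff_of_true h1 (by decide)
      · exact iff_of_false h2 (by decide)
      · exact iff_of_false h3 (by decide)
      ]
    exact h_1
  · rw [show c = ({2, 3} : Finset (Fin 4)) from by
      ext j; fin_cases j
      · exact iff_of_false h0 (by decide)
      · exact iff_of_false h1 (by decide)
      · exact iff_of_true h2 (by decide)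
      · exact iff_of_true h3 (by decide)
      ]
    exact h_23
  · rw [show c = ({2} : Finset (Fin 4)) from by
      ext j; fin_cases j
      · exact iff_of_false h0 (by decide)
      · exact iff_of_false h1 (by decide)
      · exact iff_of_true h2 (by decide)
      · exact iff_of_false h3 (by decide)
      ]
    exact h_2
  · rw [show c = ({3} : Finset (Fin 4)) from by
      ext j; fin_cases j
      · exact iff_of_false h0 (by decide)
      · exact iff_of_false h1 (by decide)
      · exact iff_of_false h2 (by decide)
      · exact iff_of_true h3 (by decide)
      ]
    exact h_3
  · rw [show c = (∅ : Finset (Fin 4)) from by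
      ext j; fin_cases j
      · exact iff_of_false h0 (by decide)
      · exact iff_of_false h1 (by decide)
      · exact iff_of_false h2 (by decide)
      · exact iff_of_false h3 (by decide)
      ]
    exact h_e

end CtGraph

namespace CtGraph
open CtAux

variable (a : ℕ → ℕ)

lemma master : ∀ (N : ℕ) (k : Fin 4 → ℕ), (∀ i : Fin 4, k i ≤ a i) → (∑ i : Fin 4, k i) = N →
    ∀ c : Finset (Fin 4),
      g a c k = 3 ^ N * CtH.H c (fun i => dQ a i + (k i : ℚ) / 3) := by
  intro N
  induction N with
  | zero =>
      intro k hk hsum c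
      have hk0 : ∀ i, k i = 0 :=
        fun i => (Finset.sum_eq_zero_iff.mp hsum) i (Finset.mem_univ i)
      have hkf : k = fun _ => 0 := funext hk0
      subst hkf
      rw [gbase a c]
      norm_num
  | succ N ih =>
      intro k hk hsum c
      have hex : ∃ i : Fin 4, 0 < k i := by
        by_contra h
        push_neg at h
        have hz : ∑ i : Fin 4, k i = 0 :=
          Finset.sum_eq_zero (fun i _ => by have := h i; omega)
        omega
      obtain ⟨i, hki⟩ := hex
      set k' := Function.update k i (k i - 1) with hk'
      have hk'le : ∀ j, k' j ≤ a j := by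
        intro j
        by_cases hj : j = i
        · subst hj; rw [hk', Function.update_self]; exact le_trans (by omega) (hk j)
        · rw [hk', Function.update_of_ne hj]; exact hk j
      have hsum' : (∑ j : Fin 4, k' j) = N := by
        have h1 : ∑ j : Fin 4, k' j = ∑ j : Fin 4, k j - 1 := by
          rw [hk', Finset.sum_update_of_mem (Finset.mem_univ i),
            Finset.sdiff_singleton_eq_erase,
            ← Finset.add_sum_erase _ k (Finset.mem_univ i)]
          omega
        omega
      have hcast : ((k i - 1 : ℕ) : ℚ) = (k i : ℚ) - 1 := by
        have h1 : (1:ℕ) ≤ k i := hki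
        push_cast [Nat.cast_sub h1]
        ring
      have hHeq : (fun j => dQ a j + (k' j : ℚ) / 3)
          = Function.update (fun j => dQ a j + (k j : ℚ) / 3) i
              ((dQ a i + (k i : ℚ) / 3) - 1/3) := by
        funext j
        by_cases hj : j = i
        · subst hj
          rw [hk', Function.update_self, Function.update_self, hcast]
          ring
        · rw [hk', Function.update_of_ne hj, Function.update_of_ne hj]
      by_cases hic : i ∈ c
      · rw [gA a c k i (hk i) hki hic, ih k' hk'le hsum' c, ih k' hk'le hsum' (c.erase i)]
        rw [CtH.H_A c (fun j => dQ a j + (k j : ℚ) / 3) i hic]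
        have hD1 : CtH.H c (fun j => dQ a j + (k' j : ℚ) / 3)
            = CtH.H c (Function.update (fun j => dQ a j + (k j : ℚ) / 3) i
                ((dQ a i + (k i : ℚ) / 3) - 1/3)) := by rw [hHeq]
        have hD2 : CtH.H (c.erase i) (fun j => dQ a j + (k' j : ℚ) / 3)
            = CtH.H (c.erase i) (fun j => dQ a j + (k j : ℚ) / 3) := by
          rw [hHeq]
          exact CtH.H_indep (c.erase i) _ i (Finset.notMem_erase i c) _
        rw [hD1, hD2]
        ring
      · rw [gB a c k i (hk i) hki hic, ih k' hk'le hsum' c]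
        have hD1 : CtH.H c (fun j => dQ a j + (k' j : ℚ) / 3)
            = CtH.H c (fun j => dQ a j + (k j : ℚ) / 3) := by
          rw [hHeq]
          exact CtH.H_indep c _ i hic _
        rw [hD1]
        ring

lemma permanent_LM :
    (LM a).permanent
      = 3 ^ (∑ i : Fin 4, a i) * CtH.H Finset.univ (fun i => dQ a i + (a i : ℚ) / 3) := by
  have h := master a (∑ i : Fin 4, a i) (fun i => a i) (fun i => le_refl _) rfl Finset.univ
  rw [g, Sset_univ, mask_univ] at h
  exact h

end CtGraph

open CtGraph CtH CtAux

/-- For `t ≥ 4` and `n = 8t+6`, the difference between `π(C_t)` and the conjectured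
bound for `n ≡ 2 (mod 4)` equals
`(3/2)^{4t}(160t⁴−200t³−1239t²−891t−162)/(216(t+1)²(t+2)(t+3)) > 0`;
in particular `π(C_t)` strictly exceeds the conjectured bound. -/
theorem C_t_counterexample (t : ℕ) (ht : 4 ≤ t) (n : ℕ) (hn : n = 8 * t + 6) :
    lapRatio (Tfam 4 (fun i => if i = 2 then t + 1 else t)) -
        ((4 * (n : ℚ) ^ 2 + 8 * (n : ℚ) + 40) / ((n : ℚ) + 2) ^ 2)
          * (3 / 2 : ℚ) ^ ((n - 6) / 2)
        = (3 / 2 : ℚ) ^ (4 * t) *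
            (160 * (t : ℚ) ^ 4 - 200 * (t : ℚ) ^ 3 - 1239 * (t : ℚ) ^ 2
              - 891 * (t : ℚ) - 162) /
            (216 * ((t : ℚ) + 1) ^ 2 * ((t : ℚ) + 2) * ((t : ℚ) + 3)) ∧
      (3 / 2 : ℚ) ^ (4 * t) *
          (160 * (t : ℚ) ^ 4 - 200 * (t : ℚ) ^ 3 - 1239 * (t : ℚ) ^ 2
            - 891 * (t : ℚ) - 162) /
          (216 * ((t : ℚ) + 1) ^ 2 * ((t : ℚ) + 2) * ((t : ℚ) + 3)) > 0 ∧
      lapRatio (Tfam 4 (fun i => if i = 2 then t + 1 else t)) >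
        ((4 * (n : ℚ) ^ 2 + 8 * (n : ℚ) + 40) / ((n : ℚ) + 2) ^ 2)
          * (3 / 2 : ℚ) ^ ((n - 6) / 2) := by
  subst hn
  set A : ℕ → ℕ := fun i => if i = 2 then t + 1 else t with hAdef
  have h0 : A ((0 : Fin 4) : ℕ) = t := rfl
  have h1 : A ((1 : Fin 4) : ℕ) = t := rfl
  have h2 : A ((2 : Fin 4) : ℕ) = t + 1 := rfl
  have h3 : A ((3 : Fin 4) : ℕ) = t := rfl
  have h0' : A 0 = t := rfl
  have h1' : A 1 = t := rfl
  have h2' : A 2 = t + 1 := rfl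
  have h3' : A 3 = t := rfl
  have hsum : (∑ i : Fin 4, A ↑i) = 4 * t + 1 := by
    rw [Fin.sum_univ_four, h0, h1, h2, h3]; ring
  have hdQ0 : dQ A 0 = (t : ℚ) + 1 := by simp [dQ, h0, h0']
  have hdQ1 : dQ A 1 = (t : ℚ) + 2 := by simp [dQ, h1, h1']
  have hdQ2 : dQ A 2 = (t : ℚ) + 4 - 1 := by
    simp [dQ, h2, h2']; push_cast; ring
  have hdQ3 : dQ A 3 = (t : ℚ) + 1 := by simp [dQ, h3, h3']
  have hH : CtH.H Finset.univ (fun i => dQ A i + (A ↑i : ℚ) / 3)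
      = (((((t:ℚ)+1+(t:ℚ)/3) * ((t:ℚ)+2+(t:ℚ)/3) + 1) * ((t:ℚ)+3+((t:ℚ)+1)/3)
            + ((t:ℚ)+1+(t:ℚ)/3)) * ((t:ℚ)+1+(t:ℚ)/3)
          + ((((t:ℚ)+1+(t:ℚ)/3) * ((t:ℚ)+2+(t:ℚ)/3)) + 1)) := by
    simp only [CtH.H, Finset.mem_univ, if_true, hdQ0, hdQ1, hdQ2, hdQ3, h0, h1, h2, h3, h0', h1', h2', h3']
    push_cast
    ring
  have hper : ((Tfam 4 A).lapMatrix ℚ).permanent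
      = 3 ^ (4 * t + 1) * (((((t:ℚ)+1+(t:ℚ)/3) * ((t:ℚ)+2+(t:ℚ)/3) + 1) * ((t:ℚ)+3+((t:ℚ)+1)/3)
            + ((t:ℚ)+1+(t:ℚ)/3)) * ((t:ℚ)+1+(t:ℚ)/3)
          + ((((t:ℚ)+1+(t:ℚ)/3) * ((t:ℚ)+2+(t:ℚ)/3)) + 1)) := by
    have h := CtGraph.permanent_LM A
    rw [hsum, hH] at h
    exact h
  have hprod : (∏ v, ((Tfam 4 A).degree v : ℚ))
      = 2 ^ (4 * t + 1) * (((t:ℚ)+1)^2 * ((t:ℚ)+2) * ((t:ℚ)+3)) := by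
    rw [CtGraph.prod_deg A, hsum, Fin.prod_univ_four, hdQ0, hdQ1, hdQ2, hdQ3]; ring
  have hratio : lapRatio (Tfam 4 A)
      = (3 ^ (4 * t + 1) * (((((t:ℚ)+1+(t:ℚ)/3) * ((t:ℚ)+2+(t:ℚ)/3) + 1) * ((t:ℚ)+3+((t:ℚ)+1)/3)
            + ((t:ℚ)+1+(t:ℚ)/3)) * ((t:ℚ)+1+(t:ℚ)/3)
          + ((((t:ℚ)+1+(t:ℚ)/3) * ((t:ℚ)+2+(t:ℚ)/3)) + 1)))
        / (2 ^ (4 * t + 1) * (((t:ℚ)+1)^2 * ((t:ℚ)+2) * ((t:ℚ)+3))) := by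
    unfold lapRatio
    rw [hper, hprod]
  have hexp : (8 * t + 6 - 6) / 2 = 4 * t := by omega
  rw [hexp]
  have h32 : ((3:ℚ)/2) ^ (4*t) = (3:ℚ)^(4*t) / (2:ℚ)^(4*t) := div_pow ..
  have ht1 : ((t:ℚ)+1) ≠ 0 := by positivity
  have ht2 : ((t:ℚ)+2) ≠ 0 := by positivity
  have ht3 : ((t:ℚ)+3) ≠ 0 := by positivity
  have hY : ((2:ℚ))^(4*t) ≠ 0 := by positivity
  have hn8 : ((8*t+6 : ℕ) : ℚ) + 2 ≠ 0 := by positivity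
  have key : lapRatio (Tfam 4 A) -
      ((4 * ((8*t+6 : ℕ) : ℚ) ^ 2 + 8 * ((8*t+6 : ℕ) : ℚ) + 40) / (((8*t+6 : ℕ) : ℚ) + 2) ^ 2)
        * (3 / 2 : ℚ) ^ (4 * t)
      = (3 / 2 : ℚ) ^ (4 * t) *
          (160 * (t : ℚ) ^ 4 - 200 * (t : ℚ) ^ 3 - 1239 * (t : ℚ) ^ 2
            - 891 * (t : ℚ) - 162) /
          (216 * ((t : ℚ) + 1) ^ 2 * ((t : ℚ) + 2) * ((t : ℚ) + 3)) := by
    rw [hratio, h32]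
    have hp3 : (3:ℚ) ^ (4*t+1) = 3 * 3^(4*t) := by ring
    have hp2 : (2:ℚ) ^ (4*t+1) = 2 * 2^(4*t) := by ring
    rw [hp3, hp2]
    push_cast
    have hn8' : (8*(t:ℚ)+6) + 2 ≠ 0 := by positivity
    field_simp
    ring
  have hnum : (0:ℚ) < 160 * (t : ℚ) ^ 4 - 200 * (t : ℚ) ^ 3 - 1239 * (t : ℚ) ^ 2
      - 891 * (t : ℚ) - 162 := by
    have ht4 : (4:ℚ) ≤ (t:ℚ) := by exact_mod_cast ht
    have hu : (0:ℚ) ≤ (t:ℚ) - 4 := by linarith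
    nlinarith [hu, mul_nonneg hu hu, mul_nonneg (mul_nonneg hu hu) hu,
      mul_nonneg (mul_nonneg (mul_nonneg hu hu) hu) hu]
  have hpos : (0:ℚ) < (3 / 2 : ℚ) ^ (4 * t) *
      (160 * (t : ℚ) ^ 4 - 200 * (t : ℚ) ^ 3 - 1239 * (t : ℚ) ^ 2
        - 891 * (t : ℚ) - 162) /
      (216 * ((t : ℚ) + 1) ^ 2 * ((t : ℚ) + 2) * ((t : ℚ) + 3)) := by
    apply div_pos
    · apply mul_pos _ hnum
      positivity
    · positivity
  exact ⟨key, hpos, by linarith⟩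
end

section
/- Every tree T on n ≥ 2 vertices satisfies per(L(T)) ≥ 2(n−1), i.e., the permanent of the Laplacian of a tree is at least twice the number of edges, with equality for the star. -/
open Finset SimpleGraph Matrix Equiv

set_option linter.unusedSectionVars false
set_option maxHeartbeats 1000000

/-- The star on `Fin n` with center `0`. -/
def starG (n : ℕ) : SimpleGraph (Fin n) where
  Adj u v := u ≠ v ∧ ((u : ℕ) = 0 ∨ (v : ℕ) = 0)
  symm := ⟨by intro u v h; tauto⟩
  loopless := ⟨by intro u h; tauto⟩

instance (n : ℕ) : DecidableRel (starG n).Adj := fun u v =>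
  inferInstanceAs (Decidable (u ≠ v ∧ ((u : ℕ) = 0 ∨ (v : ℕ) = 0)))

section TreePaths
variable {V : Type*} [Fintype V] [DecidableEq V] {G : SimpleGraph V}

lemma path_length_eq_dist (hT : G.IsTree) {u v : V} (p : G.Walk u v) (hp : p.IsPath) :
    p.length = G.dist u v := by
  obtain ⟨q, hq⟩ := (hT.isConnected.preconnected u v).exists_walk_length_eq_dist
  have hq' : q.IsPath := q.isPath_of_length_eq_dist hq
  have := isAcyclic_iff_path_unique.mp hT.IsAcyclic (⟨p, hp⟩ : G.Path u v) ⟨q, hq'⟩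
  rw [← hq]
  exact congrArg (Walk.length ∘ Subtype.val) this

lemma dist_le_of_mem_support (hT : G.IsTree) {r u x : V} (p : G.Walk r u)
    (hx : x ∈ p.support) : G.dist r x ≤ p.length :=
  le_trans (SimpleGraph.dist_le (p.takeUntil x hx)) (p.length_takeUntil_le hx)

lemma isPath_concat {u v w : V} {p : G.Walk u v} (hp : p.IsPath) (h : G.Adj v w)
    (hw : w ∉ p.support) : (p.concat h).IsPath := by
  rw [Walk.isPath_def, Walk.support_concat]
  simp only [List.concat_eq_append, List.nodup_append, List.nodup_cons, List.not_mem_nil,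
    List.nodup_nil]
  refine ⟨hp.support_nodup, by simp, ?_⟩
  intro a ha b hb
  simp only [List.mem_cons, List.not_mem_nil, or_false] at hb
  subst hb
  rintro rfl
  exact hw ha

/-- Lemma A: in a tree, distances from `r` of adjacent vertices differ by exactly 1. -/
lemma dist_adj (hT : G.IsTree) {r u v : V} (h : G.Adj u v) :
    G.dist r v = G.dist r u + 1 ∨ G.dist r u = G.dist r v + 1 := by
  obtain ⟨q, hq⟩ := (hT.isConnected.preconnected r u).exists_walk_length_eq_dist
  have hq' : q.IsPath := q.isPath_of_length_eq_dist hq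
  by_cases hv : v ∈ q.support
  · right
    -- dropUntil is a path from v to u; unique path is the edge, so length 1
    have hd : (q.dropUntil v hv).IsPath := hq'.dropUntil hv
    have h1 : (q.dropUntil v hv).length = G.dist v u :=
      path_length_eq_dist hT _ hd
    have hvu : G.dist v u = 1 := SimpleGraph.dist_eq_one_iff_adj.mpr h.symm
    have ht : (q.takeUntil v hv).length = G.dist r v := path_length_eq_dist hT _ (hq'.takeUntil hv)
    have := q.take_spec hv
    have hlen : (q.takeUntil v hv).length + (q.dropUntil v hv).length = q.length := by
      rw [← Walk.length_append, this]
    omega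
  · left
    have : (q.concat h).IsPath := isPath_concat hq' h hv
    have := path_length_eq_dist hT _ this
    rw [Walk.length_concat] at this
    omega

/-- Lemma B: unique parent. -/
lemma parent_unique (hT : G.IsTree) {r v u₁ u₂ : V} (h1 : G.Adj u₁ v) (h2 : G.Adj u₂ v)
    (hd1 : G.dist r u₁ + 1 = G.dist r v) (hd2 : G.dist r u₂ + 1 = G.dist r v) : u₁ = u₂ := by
  obtain ⟨q₁, hq₁⟩ := (hT.isConnected.preconnected r u₁).exists_walk_length_eq_dist
  have hq₁' : q₁.IsPath := q₁.isPath_of_length_eq_dist hq₁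
  obtain ⟨q₂, hq₂⟩ := (hT.isConnected.preconnected r u₂).exists_walk_length_eq_dist
  have hq₂' : q₂.IsPath := q₂.isPath_of_length_eq_dist hq₂
  have hv1 : v ∉ q₁.support := fun hv => by
    have := dist_le_of_mem_support hT q₁ hv
    omega
  have hv2 : v ∉ q₂.support := fun hv => by
    have := dist_le_of_mem_support hT q₂ hv
    omega
  have p1 : (q₁.concat h1).IsPath := isPath_concat hq₁' h1 hv1
  have p2 : (q₂.concat h2).IsPath := isPath_concat hq₂' h2 hv2
  have := isAcyclic_iff_path_unique.mp hT.IsAcyclic (⟨q₁.concat h1, p1⟩ : G.Path r v)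
    ⟨q₂.concat h2, p2⟩
  have hsupp : (q₁.concat h1).support = (q₂.concat h2).support := by
    rw [Subtype.ext_iff] at this
    exact congrArg Walk.support this
  rw [Walk.support_concat, Walk.support_concat] at hsupp
  have : q₁.support = q₂.support := by
    simpa using hsupp
  have hne1 : q₁.support ≠ [] := by simp
  have hne2 : q₂.support ≠ [] := by simp
  have h1' : q₁.support.getLast? = some u₁ := by
    rw [List.getLast?_eq_getLast hne1, q₁.getLast_support]
  have h2' : q₂.support.getLast? = some u₂ := by
    rw [List.getLast?_eq_getLast hne2, q₂.getLast_support]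
  rw [this, h2'] at h1'
  exact (Option.some_inj.mp h1').symm

variable {V : Type*} [Fintype V] [DecidableEq V] {G : SimpleGraph V}



/-- In a tree, a permutation moving every non-fixed point to a neighbor is an involution. -/
lemma sigma_sq_eq (hT : G.IsTree) (σ : Equiv.Perm V)
    (hadj : ∀ i, σ i ≠ i → G.Adj i (σ i)) : ∀ i, σ (σ i) = i := by
  by_contra hc
  push_neg at hc
  obtain ⟨i₀, hi₀⟩ := hc
  set S : Finset V := Finset.univ.filter (fun x => σ (σ x) ≠ x) with hS
  have hmem : ∀ x, x ∈ S ↔ σ (σ x) ≠ x := by intro x; simp [hS]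
  have hSne : S.Nonempty := ⟨i₀, (hmem i₀).mpr hi₀⟩
  have hmoved : ∀ x ∈ S, σ x ≠ x := by
    intro x hx h
    exact (hmem x).mp hx (by rw [h, h])
  have hσS : ∀ x ∈ S, σ x ∈ S := by
    intro x hx
    rw [hmem] at hx ⊢
    intro h
    exact hx (σ.injective h)
  have hσS' : ∀ x ∈ S, σ.symm x ∈ S := by
    intro x hx
    rw [hmem] at hx ⊢
    intro h
    apply hx
    have := congrArg σ h
    simpa using this
  set r := i₀
  obtain ⟨v, hvS, hvmax⟩ := S.exists_max_image (fun x => G.dist r x) hSne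
  set u₁ := σ v
  set u₂ := σ.symm v
  have hu₁S : u₁ ∈ S := hσS v hvS
  have hu₂S : u₂ ∈ S := hσS' v hvS
  have hu₁v : G.Adj u₁ v := (hadj v (hmoved v hvS)).symm
  have hu₂moved : σ u₂ ≠ u₂ := hmoved u₂ hu₂S
  have hu₂v : G.Adj u₂ v := by
    have := hadj u₂ hu₂moved
    have h2 : σ u₂ = v := σ.apply_symm_apply v
    rw [h2] at this
    exact this
  have hne : u₁ ≠ u₂ := by
    intro h
    apply (hmem v).mp hvS
    have : σ u₁ = σ u₂ := congrArg σ h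
    simpa [u₁, u₂] using this
  have hd1 : G.dist r u₁ + 1 = G.dist r v := by
    rcases dist_adj hT (r := r) hu₁v with h | h
    · omega
    · have := hvmax u₁ hu₁S; omega
  have hd2 : G.dist r u₂ + 1 = G.dist r v := by
    rcases dist_adj hT (r := r) hu₂v with h | h
    · omega
    · have := hvmax u₂ hu₂S; omega
  exact hne (parent_unique hT hu₁v hu₂v hd1 hd2)
end TreePaths

section Perm

variable {V : Type*} [Fintype V] [DecidableEq V] {G : SimpleGraph V} [DecidableRel G.Adj]
section lapentries
variable {V : Type*} [Fintype V] [DecidableEq V] (G : SimpleGraph V) [DecidableRel G.Adj]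

lemma lap_diag' (i : V) : G.lapMatrix ℚ i i = (G.degree i : ℚ) := by
  simp [lapMatrix, degMatrix]

lemma lap_adj' {i j : V} (h : G.Adj i j) : G.lapMatrix ℚ i j = -1 := by
  simp [lapMatrix, degMatrix, Matrix.diagonal_apply_ne _ h.ne, h]

lemma lap_nadj' {i j : V} (hne : i ≠ j) (h : ¬ G.Adj i j) : G.lapMatrix ℚ i j = 0 := by
  simp [lapMatrix, degMatrix, Matrix.diagonal_apply_ne _ hne, h]

end lapentries

lemma prod_add_card' {α : Type*} (s : Finset α) (d : α → ℕ)
    (hd : ∀ i ∈ s, 1 ≤ d i) : ∑ i ∈ s, d i + 1 ≤ ∏ i ∈ s, d i + s.card := by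
  classical
  induction s using Finset.induction with
  | empty => simp
  | insert a s' ha ih =>
    have h1 : 1 ≤ d a := hd a (Finset.mem_insert_self a s')
    have h2 : ∀ i ∈ s', 1 ≤ d i := fun i hi => hd i (Finset.mem_insert_of_mem hi)
    have ih' := ih h2
    rw [Finset.sum_insert ha, Finset.prod_insert ha, Finset.card_insert_of_notMem ha]
    have hP : 1 ≤ ∏ i ∈ s', d i := Finset.one_le_prod' h2
    have key : d a + (∏ i ∈ s', d i) ≤ d a * (∏ i ∈ s', d i) + 1 := by
      set P := ∏ i ∈ s', d i
      nlinarith [h1, hP]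
    omega

variable {V : Type*} [Fintype V] [DecidableEq V] {G : SimpleGraph V} [DecidableRel G.Adj]


/-- Each permutation term of the permanent of the Laplacian of a tree is nonnegative. -/
lemma term_nonneg' (hT : G.IsTree) (σ : Equiv.Perm V) :
    0 ≤ ∏ i, G.lapMatrix ℚ (σ i) i := by
  by_cases hbad : ∃ i, σ i ≠ i ∧ ¬ G.Adj (σ i) i
  · obtain ⟨i, hne, hna⟩ := hbad
    exact le_of_eq (Finset.prod_eq_zero (f := fun j => G.lapMatrix ℚ (σ j) j) (Finset.mem_univ i) (lap_nadj' G hne hna)).symm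
  · push_neg at hbad
    have hadj : ∀ i, σ i ≠ i → G.Adj i (σ i) := fun i hi => (hbad i hi).symm
    have hinv := sigma_sq_eq hT σ hadj
    set M : Finset V := Finset.univ.filter (fun i => σ i ≠ i) with hM
    have hsplit : ∏ i, G.lapMatrix ℚ (σ i) i =
        (∏ i ∈ M, G.lapMatrix ℚ (σ i) i) * ∏ i ∈ Mᶜ, G.lapMatrix ℚ (σ i) i :=
      (Finset.prod_mul_prod_compl M _).symm
    have h1 : ∏ i ∈ M, G.lapMatrix ℚ (σ i) i = ∏ i ∈ M, (-1 : ℚ) := by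
      apply Finset.prod_congr rfl
      intro i hi
      rw [hM, Finset.mem_filter] at hi
      exact lap_adj' G (hbad i hi.2)
    have h2 : ∏ i ∈ M, (-1 : ℚ) = 1 := by
      apply Finset.prod_involution (fun i _ => σ i)
      · intro a _; norm_num
      · intro a ha _; rw [hM, Finset.mem_filter] at ha; exact ha.2
      · intro a ha
        rw [hM, Finset.mem_filter] at ha ⊢
        refine ⟨Finset.mem_univ _, fun h => ha.2 ?_⟩
        nth_rewrite 2 [← hinv a]
        rw [h]
      · intro a _; exact hinv a
    have h3 : 0 ≤ ∏ i ∈ Mᶜ, G.lapMatrix ℚ (σ i) i := by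
      apply Finset.prod_nonneg
      intro i hi
      rw [hM, Finset.mem_compl, Finset.mem_filter] at hi
      have : σ i = i := by
        by_contra h
        exact hi ⟨Finset.mem_univ _, h⟩
      rw [this, lap_diag' G i]
      positivity
    rw [hsplit, h1, h2, one_mul]
    exact h3

variable {V : Type*} [Fintype V] [DecidableEq V] {G : SimpleGraph V} [DecidableRel G.Adj]


/-- swap as a function on `Sym2`. -/
def swapE : Sym2 V → Equiv.Perm V := Sym2.lift ⟨Equiv.swap, fun a b => Equiv.swap_comm a b⟩

@[simp] lemma swapE_mk (a b : V) : swapE s(a, b) = Equiv.swap a b := rfl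

lemma degree_pos (hT : G.IsTree) (h2 : 2 ≤ Fintype.card V) (v : V) : 0 < G.degree v := by
  obtain ⟨w, hw⟩ := Fintype.exists_ne_of_one_lt_card (by omega) v
  obtain ⟨p⟩ := hT.isConnected.preconnected v w
  rw [G.degree_pos_iff_exists_adj]
  cases p with
  | nil => exact absurd rfl hw
  | cons h q => exact ⟨_, h⟩

lemma edge_term (hT : G.IsTree) (h2 : 2 ≤ Fintype.card V) {a b : V} (h : G.Adj a b) :
    1 ≤ ∏ i, G.lapMatrix ℚ (Equiv.swap a b i) i := by
  have hab : a ≠ b := h.ne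
  have hb : b ∈ Finset.univ.erase a := Finset.mem_erase.mpr ⟨hab.symm, Finset.mem_univ b⟩
  set f : V → ℚ := fun i => G.lapMatrix ℚ (Equiv.swap a b i) i with hf
  have e1 : ∏ i, f i = f a * ∏ i ∈ Finset.univ.erase a, f i :=
    (Finset.mul_prod_erase _ f (Finset.mem_univ a)).symm
  have e2 : ∏ i ∈ Finset.univ.erase a, f i =
      f b * ∏ i ∈ (Finset.univ.erase a).erase b, f i :=
    (Finset.mul_prod_erase _ f hb).symm
  have ha' : f a = -1 := by
    rw [hf]; simp only [Equiv.swap_apply_left]; exact lap_adj' G h.symm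
  have hb' : f b = -1 := by
    rw [hf]; simp only [Equiv.swap_apply_right]; exact lap_adj' G h
  have hrest : ∀ i ∈ (Finset.univ.erase a).erase b, f i = (G.degree i : ℚ) := by
    intro i hi
    rw [Finset.mem_erase, Finset.mem_erase] at hi
    rw [hf]
    simp only [Equiv.swap_apply_of_ne_of_ne hi.2.1 hi.1]
    exact lap_diag' G i
  have hrest1 : 1 ≤ ∏ i ∈ (Finset.univ.erase a).erase b, f i := by
    rw [Finset.prod_congr rfl hrest, ← Nat.cast_prod]
    have : 1 ≤ ∏ i ∈ (Finset.univ.erase a).erase b, G.degree i :=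
      Finset.one_le_prod' (fun i _ => degree_pos hT h2 i)
    exact_mod_cast this
  rw [e1, e2, ha', hb']
  nlinarith [hrest1]

lemma one_not_mem_image (hG : ∀ e ∈ G.edgeFinset, True) :
    (1 : Equiv.Perm V) ∉ G.edgeFinset.image swapE := by
  rw [Finset.mem_image]
  rintro ⟨e, he, hee⟩
  induction e with
  | _ a b =>
    have hab : a ≠ b := (SimpleGraph.mem_edgeFinset.mp he).ne
    have h1 : Equiv.swap a b = (1 : Equiv.Perm V) := by rw [← swapE_mk]; exact hee
    have : Equiv.swap a b a = (1 : Equiv.Perm V) a := by rw [h1]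
    rw [Equiv.swap_apply_left, Equiv.Perm.one_apply] at this
    exact hab this.symm

lemma swapE_injOn : Set.InjOn swapE (G.edgeFinset : Set (Sym2 V)) := by
  intro e he e' he' hee
  induction e with
  | _ a b =>
    induction e' with
    | _ c d =>
      simp only [Finset.coe_sort_coe, Finset.mem_coe, SimpleGraph.mem_edgeFinset] at he he'
      have hab : a ≠ b := he.ne
      have hcd : c ≠ d := he'.ne
      rw [swapE_mk, swapE_mk] at hee
      have h1 : Equiv.swap c d a = b := by rw [← hee, Equiv.swap_apply_left]
      rw [Sym2.eq_iff]
      by_cases hac : a = c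
      · subst hac
        rw [Equiv.swap_apply_left] at h1
        exact Or.inl ⟨rfl, h1.symm⟩
      · by_cases had : a = d
        · subst had
          rw [Equiv.swap_apply_right] at h1
          exact Or.inr ⟨rfl, h1.symm⟩
        · rw [Equiv.swap_apply_of_ne_of_ne hac had] at h1
          exact absurd h1 hab

lemma main_bound (hT : G.IsTree) (h2 : 2 ≤ Fintype.card V) :
    2 * ((Fintype.card V : ℚ) - 1) ≤ (G.lapMatrix ℚ).permanent := by
  classical
  set t : Equiv.Perm V → ℚ := fun σ => ∏ i, G.lapMatrix ℚ (σ i) i with ht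
  set A : Finset (Equiv.Perm V) := insert 1 (G.edgeFinset.image swapE) with hA
  have hsub : ∑ σ ∈ A, t σ ≤ (G.lapMatrix ℚ).permanent := by
    rw [Matrix.permanent]
    exact Finset.sum_le_sum_of_subset_of_nonneg (Finset.subset_univ A)
      (fun σ _ _ => term_nonneg' hT σ)
  refine le_trans ?_ hsub
  rw [hA, Finset.sum_insert (one_not_mem_image (fun _ _ => trivial)),
    Finset.sum_image (fun e he e' he' h => swapE_injOn he he' h)]
  -- identity term
  have hdeg1 : ∀ i ∈ (Finset.univ : Finset V), 1 ≤ G.degree i :=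
    fun i _ => degree_pos hT h2 i
  have hcard : Finset.card G.edgeFinset + 1 = Fintype.card V := hT.card_edgeFinset
  have hsum : ∑ i, G.degree i = 2 * Finset.card G.edgeFinset :=
    SimpleGraph.sum_degrees_eq_twice_card_edges G
  have hprod : Fintype.card V - 1 ≤ ∏ i, G.degree i := by
    have h := prod_add_card' (α := V) Finset.univ (fun i => G.degree i) hdeg1
    rw [hsum, Finset.card_univ] at h
    omega
  have hid : (Fintype.card V : ℚ) - 1 ≤ t 1 := by
    rw [ht]
    simp only [Equiv.Perm.one_apply]
    have : ∏ i, G.lapMatrix ℚ i i = ((∏ i, G.degree i : ℕ) : ℚ) := by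
      push_cast
      exact Finset.prod_congr rfl (fun i _ => lap_diag' G i)
    rw [this]
    have h1 : ((Fintype.card V - 1 : ℕ) : ℚ) ≤ ((∏ i, G.degree i : ℕ) : ℚ) := by
      exact_mod_cast hprod
    have h3 : ((Fintype.card V - 1 : ℕ) : ℚ) = (Fintype.card V : ℚ) - 1 := by
      have : 1 ≤ Fintype.card V := by omega
      push_cast [this]
      ring
    linarith [h1, h3.symm.le]
  have hedges : (Fintype.card V : ℚ) - 1 ≤ ∑ e ∈ G.edgeFinset, t (swapE e) := by
    have hterm : ∀ e ∈ G.edgeFinset, (1 : ℚ) ≤ t (swapE e) := by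
      intro e he
      induction e with
      | _ a b =>
        rw [swapE_mk, ht]
        exact edge_term hT h2 (SimpleGraph.mem_edgeFinset.mp he)
    calc (Fintype.card V : ℚ) - 1 = (G.edgeFinset.card : ℚ) := by
          have := hT.card_edgeFinset
          have h4 : (Fintype.card V : ℚ) = (G.edgeFinset.card : ℚ) + 1 := by
            exact_mod_cast congrArg (Nat.cast : ℕ → ℚ) this.symm
          rw [h4]; ring
      _ = ∑ _e ∈ G.edgeFinset, (1 : ℚ) := by rw [Finset.sum_const, nsmul_eq_mul, mul_one]
      _ ≤ _ := Finset.sum_le_sum hterm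
  linarith [hid, hedges]

end Perm

section star
variable {n : ℕ}

lemma star_adj [NeZero n] (u v : Fin n) :
    (starG n).Adj u v ↔ u ≠ v ∧ (u = 0 ∨ v = 0) := by
  have h0 : ((0 : Fin n) : ℕ) = 0 := Fin.val_zero n
  constructor
  · rintro ⟨h, h2 | h2⟩
    · exact ⟨h, Or.inl (Fin.ext (by rw [h2, h0]))⟩
    · exact ⟨h, Or.inr (Fin.ext (by rw [h2, h0]))⟩
  · rintro ⟨h, h2 | h2⟩
    · exact ⟨h, Or.inl (by rw [h2, h0])⟩
    · exact ⟨h, Or.inr (by rw [h2, h0])⟩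

lemma star_deg_zero [NeZero n] : (starG n).degree (0 : Fin n) = n - 1 := by
  rw [SimpleGraph.degree]
  have : (starG n).neighborFinset 0 = Finset.univ.erase 0 := by
    ext u
    rw [SimpleGraph.mem_neighborFinset, star_adj, Finset.mem_erase]
    constructor
    · rintro ⟨h, _⟩; exact ⟨fun he => h he.symm, Finset.mem_univ _⟩
    · rintro ⟨h, _⟩; exact ⟨fun he => h he.symm, Or.inl rfl⟩
  rw [this, Finset.card_erase_of_mem (Finset.mem_univ _), Finset.card_univ, Fintype.card_fin]

lemma star_deg_ne [NeZero n] (j : Fin n) (hj : j ≠ 0) : (starG n).degree j = 1 := by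
  rw [SimpleGraph.degree]
  have : (starG n).neighborFinset j = {0} := by
    ext u
    rw [SimpleGraph.mem_neighborFinset, star_adj, Finset.mem_singleton]
    constructor
    · rintro ⟨h, h0 | h0⟩
      · exact absurd h0 hj
      · exact h0
    · rintro rfl
      exact ⟨fun h => hj h, Or.inr rfl⟩
  rw [this, Finset.card_singleton]

lemma star_per (hn : 2 ≤ n) :
    ((starG n).lapMatrix ℚ).permanent = 2 * ((n : ℚ) - 1) := by
  haveI : NeZero n := ⟨by omega⟩
  set t : Equiv.Perm (Fin n) → ℚ := fun σ => ∏ i, (starG n).lapMatrix ℚ (σ i) i with ht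
  set B : Finset (Equiv.Perm (Fin n)) :=
    (Finset.univ.filter (· ≠ (0 : Fin n))).image (fun j => Equiv.swap 0 j) with hB
  set A : Finset (Equiv.Perm (Fin n)) := insert 1 B with hA
  have hzero : ∀ σ ∉ A, t σ = 0 := by
    intro σ hσ
    by_cases hbad : ∃ i, σ i ≠ i ∧ ¬ (starG n).Adj (σ i) i
    · obtain ⟨i, hne, hna⟩ := hbad
      exact Finset.prod_eq_zero (f := fun j => (starG n).lapMatrix ℚ (σ j) j) (Finset.mem_univ i)
        (lap_nadj' (starG n) hne hna)
    · exfalso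
      push_neg at hbad
      apply hσ
      rw [hA]
      by_cases h1 : σ = 1
      · rw [h1]; exact Finset.mem_insert_self 1 _
      · have hmoved : ∃ i, σ i ≠ i := by
          by_contra hc
          push_neg at hc
          exact h1 (Equiv.ext fun x => hc x)
        have key : ∀ i, σ i ≠ i → i ≠ 0 → σ i = 0 := by
          intro i hi hi0
          have hadj := hbad i hi
          rw [star_adj] at hadj
          rcases hadj.2 with h | h
          · exact h
          · exact absurd h hi0
        obtain ⟨i, hi⟩ := hmoved
        have hexists : ∃ j, j ≠ 0 ∧ σ j = 0 := by
          by_cases hi0 : i = 0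
          · subst hi0
            have hm : σ (σ 0) ≠ σ 0 := fun h => hi (σ.injective h)
            exact ⟨σ 0, hi, key _ hm hi⟩
          · exact ⟨i, hi0, key i hi hi0⟩
        obtain ⟨j, hj0, hj⟩ := hexists
        have h0m : σ 0 ≠ 0 := fun h => hj0 (σ.injective (hj.trans h.symm))
        have hσ0 : σ 0 = j := by
          have hmm : σ (σ 0) ≠ σ 0 := fun h => h0m (σ.injective h)
          have h2 : σ (σ 0) = 0 := key (σ 0) hmm h0m
          exact σ.injective (h2.trans hj.symm)
        have hσs : σ = Equiv.swap 0 j := by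
          apply Equiv.ext
          intro x
          by_cases hx0 : x = 0
          · subst hx0; rw [Equiv.swap_apply_left]; exact hσ0
          · by_cases hxj : x = j
            · subst hxj; rw [Equiv.swap_apply_right]; exact hj
            · rw [Equiv.swap_apply_of_ne_of_ne hx0 hxj]
              by_contra hxm
              exact hxj (σ.injective ((key x hxm hx0).trans hj.symm))
        rw [hσs]
        exact Finset.mem_insert_of_mem (Finset.mem_image_of_mem _
          (Finset.mem_filter.mpr ⟨Finset.mem_univ _, hj0⟩))
  have hper : ((starG n).lapMatrix ℚ).permanent = ∑ σ ∈ A, t σ :=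
    (Finset.sum_subset (Finset.subset_univ A) (fun σ _ h => hzero σ h)).symm
  have hnotmem : (1 : Equiv.Perm (Fin n)) ∉ B := by
    rw [hB, Finset.mem_image]
    rintro ⟨j, hjmem, hj⟩
    rw [Finset.mem_filter] at hjmem
    have : Equiv.swap 0 j 0 = (1 : Equiv.Perm (Fin n)) 0 := by rw [hj]
    rw [Equiv.swap_apply_left, Equiv.Perm.one_apply] at this
    exact hjmem.2 this
  have hinj : ∀ j ∈ Finset.univ.filter (· ≠ (0 : Fin n)),
      ∀ j' ∈ Finset.univ.filter (· ≠ (0 : Fin n)),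
      Equiv.swap 0 j = Equiv.swap 0 j' → j = j' := by
    intro j _ j' _ h
    have : Equiv.swap 0 j 0 = Equiv.swap 0 j' 0 := by rw [h]
    simpa [Equiv.swap_apply_left] using this
  have hcast : ((n - 1 : ℕ) : ℚ) = (n : ℚ) - 1 := by
    have : 1 ≤ n := by omega
    push_cast [this]; ring
  have ht1 : t 1 = (n : ℚ) - 1 := by
    rw [ht]
    simp only [Equiv.Perm.one_apply]
    rw [Finset.prod_congr rfl (fun i _ => lap_diag' (starG n) i),
      ← Finset.mul_prod_erase _ _ (Finset.mem_univ (0 : Fin n))]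
    have h2 : ∀ i ∈ Finset.univ.erase (0 : Fin n), (((starG n).degree i : ℚ)) = 1 := by
      intro i hi
      rw [Finset.mem_erase] at hi
      rw [star_deg_ne i hi.1]
      norm_num
    rw [Finset.prod_congr rfl h2, Finset.prod_const_one, mul_one, star_deg_zero, hcast]
  have htj : ∀ j ∈ Finset.univ.filter (· ≠ (0 : Fin n)), t (Equiv.swap 0 j) = 1 := by
    intro j hj
    rw [Finset.mem_filter] at hj
    have hj0 : j ≠ 0 := hj.2
    set f : Fin n → ℚ := fun i => (starG n).lapMatrix ℚ (Equiv.swap 0 j i) i with hf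
    have hb : j ∈ Finset.univ.erase (0 : Fin n) :=
      Finset.mem_erase.mpr ⟨hj0, Finset.mem_univ j⟩
    have e1 : ∏ i, f i = f 0 * ∏ i ∈ Finset.univ.erase (0 : Fin n), f i :=
      (Finset.mul_prod_erase _ f (Finset.mem_univ (0 : Fin n))).symm
    have e2 : ∏ i ∈ Finset.univ.erase (0 : Fin n), f i =
        f j * ∏ i ∈ (Finset.univ.erase (0 : Fin n)).erase j, f i := by
      exact (Finset.mul_prod_erase _ f hb).symm
    have hadj : (starG n).Adj 0 j := by
      rw [star_adj]
      exact ⟨fun h => hj0 h.symm, Or.inl rfl⟩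
    have hf0 : f 0 = -1 := by
      rw [hf]
      simp only [Equiv.swap_apply_left]
      exact lap_adj' (starG n) hadj.symm
    have hfj : f j = -1 := by
      rw [hf]
      simp only [Equiv.swap_apply_right]
      exact lap_adj' (starG n) hadj
    have hrest : ∀ i ∈ (Finset.univ.erase (0 : Fin n)).erase j, f i = 1 := by
      intro i hi
      rw [Finset.mem_erase, Finset.mem_erase] at hi
      rw [hf]
      simp only [Equiv.swap_apply_of_ne_of_ne hi.2.1 hi.1]
      rw [lap_diag' (starG n) i, star_deg_ne i hi.2.1]
      norm_num
    rw [ht]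
    simp only [← hf]
    rw [e1, e2, hf0, hfj, Finset.prod_congr rfl hrest, Finset.prod_const_one]
    ring
  have hcardf : (Finset.univ.filter (· ≠ (0 : Fin n))).card = n - 1 := by
    have : Finset.univ.filter (· ≠ (0 : Fin n)) = Finset.univ.erase 0 := by
      ext u
      simp [Finset.mem_erase, and_comm]
    rw [this, Finset.card_erase_of_mem (Finset.mem_univ _), Finset.card_univ, Fintype.card_fin]
  rw [hper, hA, Finset.sum_insert hnotmem, hB, Finset.sum_image hinj, ht1,
    Finset.sum_congr rfl htj, Finset.sum_const, hcardf, nsmul_eq_mul, mul_one, hcast]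
  ring
end star

/-- Every tree on `n ≥ 2` vertices satisfies `per(L(T)) ≥ 2(n−1)`, with equality for
the star. -/
theorem permanent_lapMatrix_ge (n : ℕ) (hn : 2 ≤ n) :
    (∀ T : SimpleGraph (Fin n), ∀ _ : DecidableRel T.Adj, T.IsTree →
        (T.lapMatrix ℚ).permanent ≥ 2 * ((n : ℚ) - 1)) ∧
      ((starG n).lapMatrix ℚ).permanent = 2 * ((n : ℚ) - 1) := by
  constructor
  · intro T inst hT
    have h2 : 2 ≤ Fintype.card (Fin n) := by rwa [Fintype.card_fin]
    have hmb := main_bound (G := T) hT h2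
    rw [Fintype.card_fin] at hmb
    exact hmb
  · exact star_per hn
end
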